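/- arXiv:2109.04099 — 9 statements merged into one kernel-verified Lean document; each statement's English description precedes it below -/
import Mathlib

section
/- Every forest F admits an edge-coloring with at most 2 colors such that every nonempty color class induces a subgraph in which every vertex of positive degree has odd degree. -/
open SimpleGraph Finset

variable {V : Type*} [Fintype V] [DecidableEq V]

/-- Number of edges incident to `v` receiving color `i` under the edge-coloring `f`. -/
def colorCount (G : SimpleGraph V) [DecidableRel G.Adj] {k : ℕ}
    (f : Sym2 V → Fin k) (v : V) (i : Fin k) : ℕ :=
  ((G.incidenceFinset v).filter (fun e => f e = i)).card

/-- The edge-coloring `f` is odd at the vertex `v`: every color appearing at `v`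
appears an odd number of times at `v`. -/
def OddAt (G : SimpleGraph V) [DecidableRel G.Adj] {k : ℕ}
    (f : Sym2 V → Fin k) (v : V) : Prop :=
  ∀ i : Fin k, colorCount G f v i = 0 ∨ Odd (colorCount G f v i)

/-- An odd edge-coloring: odd at every vertex. -/
def IsOddColoring (G : SimpleGraph V) [DecidableRel G.Adj] {k : ℕ}
    (f : Sym2 V → Fin k) : Prop :=
  ∀ v : V, OddAt G f v

/-- The odd chromatic index: least `k` admitting an odd `k`-edge-coloring. -/
noncomputable def oddChromIndex (G : SimpleGraph V) [DecidableRel G.Adj] : ℕ :=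
  sInf {k | ∃ f : Sym2 V → Fin k, IsOddColoring G f}

section AuxOddColoring

set_option linter.unusedSectionVars false
set_option maxHeartbeats 1000000

lemma path_length_eq_dist {G : SimpleGraph V} (hG : G.IsAcyclic) {r x : V}
    {p : G.Walk r x} (hp : p.IsPath) : p.length = G.dist r x := by
  refine le_antisymm ?_ (SimpleGraph.dist_le p)
  obtain ⟨w, hw⟩ := (p.reachable).exists_walk_length_eq_dist
  have h1 : (⟨p, hp⟩ : G.Path r x) = w.toPath := hG.path_unique _ _
  have h2 : (w.toPath : G.Walk r x).length ≤ w.length := w.length_bypass_le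
  calc p.length = (w.toPath : G.Walk r x).length := by rw [← h1]
    _ ≤ w.length := h2
    _ = G.dist r x := hw

lemma dist_le_of_mem_support {G : SimpleGraph V} {r x w : V}
    {p : G.Walk r x} (hw : w ∈ p.support) : G.dist r w ≤ p.length :=
  le_trans (SimpleGraph.dist_le (p.takeUntil w hw)) (p.length_takeUntil_le hw)

lemma tree_adj_dist {G : SimpleGraph V} (hG : G.IsAcyclic) {r x y : V}
    (hr : G.Reachable r x) (hxy : G.Adj x y) :
    G.dist r y = G.dist r x + 1 ∨ G.dist r x = G.dist r y + 1 := by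
  obtain ⟨w, hw⟩ := hr.exists_walk_length_eq_dist
  set p : G.Walk r x := (w.toPath : G.Walk r x) with hpdef
  have hp : p.IsPath := w.toPath.2
  have hplen : p.length = G.dist r x := path_length_eq_dist hG hp
  by_cases hy : y ∈ p.support
  · right
    have ht : (p.takeUntil y hy).IsPath := hp.takeUntil hy
    have hd : (p.dropUntil y hy).IsPath := hp.dropUntil hy
    have hsingle : (SimpleGraph.Walk.cons hxy.symm SimpleGraph.Walk.nil : G.Walk y x).IsPath := by
      simp [SimpleGraph.Walk.cons_isPath_iff, hxy.ne']
    have heq : (⟨p.dropUntil y hy, hd⟩ : G.Path y x)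
        = ⟨SimpleGraph.Walk.cons hxy.symm SimpleGraph.Walk.nil, hsingle⟩ := hG.path_unique _ _
    have hlen : (p.dropUntil y hy).length = 1 := by
      have := congrArg (fun q : G.Path y x => (q : G.Walk y x).length) heq
      simpa using this
    have hsplit : (p.takeUntil y hy).length + (p.dropUntil y hy).length = p.length := by
      rw [← SimpleGraph.Walk.length_append, SimpleGraph.Walk.take_spec]
    have hty : (p.takeUntil y hy).length = G.dist r y := path_length_eq_dist hG ht
    omega
  · left
    have hq : (p.concat hxy).IsPath := by
      rw [← SimpleGraph.Walk.isPath_reverse_iff, SimpleGraph.Walk.reverse_concat]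
      exact hp.reverse.cons (by simpa using hy)
    have := path_length_eq_dist hG hq
    rw [SimpleGraph.Walk.length_concat, hplen] at this
    omega

lemma isPath_concat {G : SimpleGraph V} {u x w : V} {p : G.Walk u x} (hp : p.IsPath)
    (h : G.Adj x w) (hw : w ∉ p.support) : (p.concat h).IsPath := by
  rw [← SimpleGraph.Walk.isPath_reverse_iff, SimpleGraph.Walk.reverse_concat]
  exact hp.reverse.cons (by simpa using hw)

lemma exists_penultimate {G : SimpleGraph V} [DecidableRel G.Adj] (hG : G.IsAcyclic)
    {r : V} (hr : 2 ≤ G.degree r) :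
    ∃ v, 2 ≤ G.degree v ∧ ({x ∈ G.neighborFinset v | G.degree x ≠ 1}).card ≤ 1 := by
  classical
  set P : Finset V := {x ∈ univ | G.Reachable r x ∧ 2 ≤ G.degree x} with hP
  have hPne : P.Nonempty := ⟨r, by simp [hP, hr, SimpleGraph.Reachable.refl]⟩
  obtain ⟨v, hvP, hvmax⟩ := Finset.exists_max_image P (fun x => G.dist r x) hPne
  simp only [hP, Finset.mem_filter, Finset.mem_univ, true_and] at hvP
  obtain ⟨hreach, hdeg⟩ := hvP
  refine ⟨v, hdeg, ?_⟩
  set d := G.dist r v with hd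
  have hbad : ∀ x, G.Adj v x → G.degree x ≠ 1 → d = G.dist r x + 1 := by
    intro x hx hdx
    rcases tree_adj_dist hG hreach hx with h | h
    · exfalso
      have hxreach : G.Reachable r x := hreach.trans hx.reachable
      have hdegx : 1 ≤ G.degree x := by
        have hv : v ∈ G.neighborFinset x := by
          rw [SimpleGraph.mem_neighborFinset]; exact hx.symm
        have := Finset.card_pos.mpr ⟨v, hv⟩
        rwa [SimpleGraph.card_neighborFinset_eq_degree] at this
      have h2 : ¬ 2 ≤ G.degree x := by
        intro h2
        have hxP : x ∈ P := by simp [hP, hxreach, h2]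
        have := hvmax x hxP
        omega
      omega
    · exact h
  have mk : ∀ z, G.Adj v z → d = G.dist r z + 1 →
      ∃ p : G.Walk r z, p.IsPath ∧ v ∉ p.support ∧ p.length = G.dist r z := by
    intro z hz hdz
    obtain ⟨w, -⟩ := (hreach.trans hz.reachable).exists_walk_length_eq_dist
    refine ⟨(w.toPath : G.Walk r z), w.toPath.2, ?_, path_length_eq_dist hG w.toPath.2⟩
    intro hv
    have h1 := dist_le_of_mem_support (G := G) hv
    have h2 := path_length_eq_dist hG w.toPath.2
    omega
  rw [Finset.card_le_one]
  intro x hx y hy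
  simp only [Finset.mem_filter, SimpleGraph.mem_neighborFinset] at hx hy
  obtain ⟨hvx, hdx⟩ := hx
  obtain ⟨hvy, hdy⟩ := hy
  obtain ⟨px, hpx, hvpx, -⟩ := mk x hvx (hbad x hvx hdx)
  obtain ⟨py, hpy, hvpy, -⟩ := mk y hvy (hbad y hvy hdy)
  have hqx : (px.concat hvx.symm).IsPath := isPath_concat hpx _ hvpx
  have hqy : (py.concat hvy.symm).IsPath := isPath_concat hpy _ hvpy
  have heq : (⟨px.concat hvx.symm, hqx⟩ : G.Path r v) = ⟨py.concat hvy.symm, hqy⟩ :=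
    hG.path_unique _ _
  have heq' : px.concat hvx.symm = py.concat hvy.symm := congrArg Subtype.val heq
  obtain ⟨hxy, -⟩ := SimpleGraph.Walk.concat_inj heq'
  exact hxy

lemma oddAt_of_degree_le_one {G : SimpleGraph V} [DecidableRel G.Adj] {k : ℕ}
    (f : Sym2 V → Fin k) {w : V} (hw : G.degree w ≤ 1) : OddAt G f w := by
  intro i
  have h1 : colorCount G f w i ≤ 1 := by
    calc colorCount G f w i ≤ (G.incidenceFinset w).card := Finset.card_filter_le _ _
      _ = G.degree w := G.card_incidenceFinset_eq_degree w
      _ ≤ 1 := hw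
  interval_cases h : colorCount G f w i
  · exact Or.inl rfl
  · exact Or.inr odd_one


lemma main_aux : ∀ (n : ℕ) (G : SimpleGraph V) [DecidableRel G.Adj], G.IsAcyclic →
    G.edgeFinset.card = n → ∃ f : Sym2 V → Fin 2, IsOddColoring G f := by
  intro n
  induction n using Nat.strong_induction_on with
  | _ n ih =>
  intro G instG hF hn
  classical
  by_cases hex : ∃ r, 2 ≤ G.degree r
  case neg =>
    push_neg at hex
    exact ⟨fun _ => 0, fun w => oddAt_of_degree_le_one _ (by have := hex w; omega)⟩
  obtain ⟨r, hr⟩ := hex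
  obtain ⟨v, hdegv, hbad⟩ := exists_penultimate hF hr
  set L : Finset V := {x ∈ G.neighborFinset v | G.degree x = 1} with hL
  set m := L.card with hm
  have hLm : G.degree v ≤ m + 1 := by
    have := Finset.card_filter_add_card_filter_not
      (s := G.neighborFinset v) (p := fun x => G.degree x = 1)
    rw [SimpleGraph.card_neighborFinset_eq_degree] at this
    have hbad' : #(filter (fun a => ¬G.degree a = 1) (G.neighborFinset v)) ≤ 1 := by
      simpa [Ne] using hbad
    rw [hm, hL]
    omega
  have hm1 : 1 ≤ m := by omega
  -- the removed edges
  set R : Finset (Sym2 V) := L.image (fun l => s(v, l)) with hR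
  have hRcard : R.card = m := Finset.card_image_of_injective L
    (fun a b hab => Sym2.congr_right.mp hab)
  have hLadj : ∀ l ∈ L, G.Adj v l ∧ G.degree l = 1 := by
    intro l hl
    rw [hL, Finset.mem_filter, SimpleGraph.mem_neighborFinset] at hl
    exact hl
  have hRinc : R ⊆ G.incidenceFinset v := by
    intro e he
    rw [hR, Finset.mem_image] at he
    obtain ⟨l, hl, rfl⟩ := he
    rw [SimpleGraph.mem_incidenceFinset]
    exact ⟨(G.mem_edgeSet).mpr (hLadj l hl).1, Sym2.mem_mk_left v l⟩
  have hRsub : R ⊆ G.edgeFinset := by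
    intro e he
    have := hRinc he
    rw [SimpleGraph.mem_incidenceFinset] at this
    rw [SimpleGraph.mem_edgeFinset]
    exact this.1
  set G' : SimpleGraph V := G.deleteEdges ↑R with hG'
  haveI instG' : DecidableRel G'.Adj := fun a b =>
    decidable_of_iff (G.Adj a b ∧ s(a, b) ∉ R) (by simp [hG'])
  have hG'le : G' ≤ G := by rw [hG']; exact SimpleGraph.deleteEdges_le _
  have hG'acyclic : G'.IsAcyclic := by
    intro w c hc
    exact hF (c.mapLe hG'le) (hc.mapLe hG'le)
  have hEdges : G'.edgeFinset = G.edgeFinset \ R := by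
    ext e
    simp [SimpleGraph.mem_edgeFinset, hG', SimpleGraph.edgeSet_deleteEdges]
  have hcard' : G'.edgeFinset.card = n - m := by
    rw [hEdges, Finset.card_sdiff_of_subset hRsub, hn, hRcard]
  have hmn : m ≤ n := by
    rw [← hn, ← hRcard]; exact Finset.card_le_card hRsub
  obtain ⟨f', hf'⟩ := ih (n - m) (by omega) G' hG'acyclic hcard'
  -- incidence finsets
  have hIncEq : ∀ w, G'.incidenceFinset w = G.incidenceFinset w \ R := by
    intro w
    ext e
    simp only [SimpleGraph.mem_incidenceFinset, Finset.mem_sdiff,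
      SimpleGraph.incidenceSet, Set.mem_setOf_eq, hG', SimpleGraph.edgeSet_deleteEdges,
      Set.mem_diff, Finset.mem_coe]
    tauto
  obtain ⟨l0, hl0⟩ := Finset.card_pos.mp (by omega : 0 < L.card)
  have hl0R : s(v, l0) ∈ R := Finset.mem_image_of_mem _ hl0
  set F : Fin 2 → Fin 2 → Sym2 V → Fin 2 :=
    fun a b e => if e = s(v, l0) then a else if e ∈ R then b else f' e with hFdef
  -- vertices other than v and L
  have sub1 : ∀ (a b : Fin 2) (w : V), w ≠ v → w ∉ L → OddAt G (F a b) w := by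
    intro a b w hwv hwL i
    have hdisj : ∀ e ∈ G.incidenceFinset w, e ∉ R := by
      intro e he heR
      rw [hR, Finset.mem_image] at heR
      obtain ⟨l, hl, rfl⟩ := heR
      rw [SimpleGraph.mem_incidenceFinset] at he
      have hmem : w = v ∨ w = l := Sym2.mem_iff.mp he.2
      rcases hmem with rfl | rfl
      · exact hwv rfl
      · exact hwL hl
    have hinc : G'.incidenceFinset w = G.incidenceFinset w := by
      rw [hIncEq, Finset.sdiff_eq_self_iff_disjoint]
      exact Finset.disjoint_right.mpr (fun e heR hei => hdisj e hei heR)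
    have : colorCount G (F a b) w i = colorCount G' f' w i := by
      unfold colorCount
      rw [hinc]
      congr 1
      apply Finset.filter_congr
      intro e he
      have h1 := hdisj e he
      have h2 : e ≠ s(v, l0) := fun h => h1 (h ▸ hl0R)
      rw [hFdef]
      simp only [h2, if_false, h1, if_neg, ite_false]
    rw [this]
    exact hf' w i
  have subL : ∀ (a b : Fin 2), ∀ l ∈ L, OddAt G (F a b) l := by
    intro a b l hl
    exact oddAt_of_degree_le_one _ (le_of_eq (hLadj l hl).2)
  have assemble : ∀ (a b : Fin 2), OddAt G (F a b) v → ∃ f : Sym2 V → Fin 2, IsOddColoring G f := by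
    intro a b hv
    refine ⟨F a b, fun w => ?_⟩
    by_cases h1 : w = v
    · exact h1 ▸ hv
    by_cases h2 : w ∈ L
    · exact subL a b w h2
    · exact sub1 a b w h1 h2
  -- structure of the incidence set at v
  set A := G'.incidenceFinset v with hA
  have hIncV : G.incidenceFinset v = A ∪ R := by
    rw [hA, hIncEq]; exact (Finset.sdiff_union_of_subset hRinc).symm
  have hdisjA : Disjoint A R := by rw [hA, hIncEq]; exact Finset.sdiff_disjoint
  have hAcard : A.card = G.degree v - m := by
    rw [hA, hIncEq, Finset.card_sdiff_of_subset hRinc, hRcard, G.card_incidenceFinset_eq_degree]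
  have hmdeg : m ≤ G.degree v := by
    rw [← G.card_incidenceFinset_eq_degree, ← hRcard]
    exact Finset.card_le_card hRinc
  have hA01 : A.card = 0 ∨ A.card = 1 := by omega
  have countv : ∀ a b i, colorCount G (F a b) v i
      = (A.filter (fun e => F a b e = i)).card + (R.filter (fun e => F a b e = i)).card := by
    intro a b i
    unfold colorCount
    rw [hIncV, Finset.filter_union,
      Finset.card_union_of_disjoint (Finset.disjoint_filter_filter hdisjA)]
  have hFl0 : ∀ a b, F a b s(v, l0) = a := by intro a b; simp [hFdef]
  have hFRb : ∀ a b, ∀ e ∈ R, e ≠ s(v, l0) → F a b e = b := by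
    intro a b e he hne
    rw [hFdef]
    simp [hne, he]
  have hRconst : ∀ (b : Fin 2) i, (R.filter (fun e => F b b e = i)).card
      = if b = i then m else 0 := by
    intro b i
    by_cases h : b = i
    · rw [if_pos h, Finset.filter_true_of_mem, hRcard]
      intro e he
      by_cases h0 : e = s(v, l0)
      · rw [h0, hFl0]; exact h
      · rw [hFRb b b e he h0]; exact h
    · rw [if_neg h]
      rw [Finset.card_eq_zero, Finset.filter_eq_empty_iff]
      intro e he
      by_cases h0 : e = s(v, l0)
      · rw [h0, hFl0]; exact h
      · rw [hFRb b b e he h0]; exact h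
  have hRsplit : ∀ i, (R.filter (fun e => F 1 0 e = i)).card
      = (if (1 : Fin 2) = i then 1 else 0) + (if (0 : Fin 2) = i then m - 1 else 0) := by
    intro i
    have hR' : R = insert s(v, l0) (R.erase s(v, l0)) := (Finset.insert_erase hl0R).symm
    rw [hR', Finset.filter_insert]
    have hcerase : (R.erase s(v, l0)).card = m - 1 := by
      rw [Finset.card_erase_of_mem hl0R, hRcard]
    have herase : ∀ i', ((R.erase s(v, l0)).filter (fun e => F 1 0 e = i')).card
        = if (0 : Fin 2) = i' then m - 1 else 0 := by
      intro i'
      by_cases h : (0 : Fin 2) = i'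
      · rw [if_pos h, Finset.filter_true_of_mem, hcerase]
        intro e he
        rw [hFRb 1 0 e (Finset.mem_of_mem_erase he) (Finset.ne_of_mem_erase he)]
        exact h
      · rw [if_neg h, Finset.card_eq_zero, Finset.filter_eq_empty_iff]
        intro e he
        rw [hFRb 1 0 e (Finset.mem_of_mem_erase he) (Finset.ne_of_mem_erase he)]
        exact h
    rw [hFl0]
    by_cases h : (1 : Fin 2) = i
    · rw [if_pos h, if_pos h, Finset.card_insert_of_notMem
        (fun hmem => (Finset.ne_of_mem_erase (Finset.mem_of_mem_filter _ hmem)) rfl), herase]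
      omega
    · rw [if_neg h, if_neg h, herase]
      omega
  -- now the case analysis
  rcases hA01 with hA0 | hA1
  · have hAempty : A = ∅ := Finset.card_eq_zero.mp hA0
    have hAfilter : ∀ a b (i : Fin 2), (A.filter (fun e => F a b e = i)).card = 0 := by
      intro a b i; rw [hAempty]; simp
    rcases Nat.even_or_odd m with hme | hmo
    · -- m even, so m ≥ 2 : use a = 1, b = 0
      rw [Nat.even_iff] at hme
      apply assemble 1 0
      intro i
      rw [countv, hAfilter, hRsplit]
      have hiff : ∀ j : Fin 2, ((1 : Fin 2) = j) ↔ ¬((0 : Fin 2) = j) := by decide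
      by_cases h : (0 : Fin 2) = i
      · right
        rw [if_neg (fun h1 => (hiff i).mp h1 h), if_pos h, Nat.odd_iff]
        omega
      · right
        rw [if_pos ((hiff i).mpr h), if_neg h, Nat.odd_iff]
    · -- m odd : use a = b = 0
      rw [Nat.odd_iff] at hmo
      apply assemble 0 0
      intro i
      rw [countv, hAfilter, hRconst]
      by_cases h : (0 : Fin 2) = i
      · right; rw [if_pos h, Nat.odd_iff]; omega
      · left; rw [if_neg h]
  · obtain ⟨e0, hAe⟩ := Finset.card_eq_one.mp hA1
    have he0A : e0 ∈ A := by rw [hAe]; exact Finset.mem_singleton_self e0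
    have he0R : e0 ∉ R := by
      rw [hA, hIncEq, Finset.mem_sdiff] at he0A
      exact he0A.2
    have he0l0 : e0 ≠ s(v, l0) := fun h => he0R (h ▸ hl0R)
    have hFe0 : ∀ a b, F a b e0 = f' e0 := by
      intro a b
      rw [hFdef]
      simp [he0l0, he0R]
    have hAfilter : ∀ a b (i : Fin 2), (A.filter (fun e => F a b e = i)).card
        = if f' e0 = i then 1 else 0 := by
      intro a b i
      rw [hAe, Finset.filter_singleton, hFe0]
      by_cases h : f' e0 = i
      · rw [if_pos h, if_pos h, Finset.card_singleton]
      · rw [if_neg h, if_neg h, Finset.card_empty]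
    set c0 := f' e0 with hc0
    rcases Nat.even_or_odd m with hme | hmo
    · -- m even : a = b = c0
      rw [Nat.even_iff] at hme
      apply assemble c0 c0
      intro i
      rw [countv, hAfilter, hRconst]
      by_cases h : c0 = i
      · right; rw [if_pos h, if_pos h, Nat.odd_iff]; omega
      · left; rw [if_neg h, if_neg h]
    · -- m odd : a = b = c0 + 1
      rw [Nat.odd_iff] at hmo
      apply assemble (c0 + 1) (c0 + 1)
      intro i
      rw [countv, hAfilter, hRconst]
      by_cases h : c0 = i
      · have h' : ¬(c0 + 1 = i) :=
          (by decide : ∀ c j : Fin 2, c = j → ¬(c + 1 = j)) c0 i h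
        right; rw [if_pos h, if_neg h']
        exact odd_one
      · have h' : c0 + 1 = i :=
          (by decide : ∀ c j : Fin 2, ¬(c = j) → c + 1 = j) c0 i h
        right; rw [if_neg h, if_pos h', Nat.odd_iff]
        omega

end AuxOddColoring

theorem forest_odd_two_edge_colorable (G : SimpleGraph V) [DecidableRel G.Adj]
    (hF : G.IsAcyclic) :
    ∃ f : Sym2 V → Fin 2, IsOddColoring G f := by
  exact main_aux G.edgeFinset.card G hF rfl
end

section
/- If v is a vertex of a graph G such that G − v is a forest, then G admits a 2-edge-coloring that is odd at every vertex other than v. -/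
open SimpleGraph Finset

variable {V : Type*} [Fintype V] [DecidableEq V]

/-!
Strengthen the claim: for every vertex set `M` there is a 2-edge-colouring that is monochromatic
at the vertices of `M` and odd at all other vertices distinct from `v`; induct on `G`.
If `G - v` has an edge, pick a leaf `l` of the forest `G - v` with neighbour `p` there, delete the
edges at `l`, and colour the rest with `p` added to `M`, so that `p` is monochromatic, of colour `c`
say (a colouring odd at `p` could have two odd colour classes there, and then no colour for `lp`
would do). Give `lp` the colour `c` if `p ∈ M` or `deg p` is odd, and the other colour otherwise
(then `deg p - 1` is odd).
The only other edge at `l` is `lv`, which matters at no vertex but `l`, so it is coloured to fix `l`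
by the same rule. If `G - v` has no edge, every vertex other than `v` has degree at most one.
-/

theorem SimpleGraph.IsAcyclic.exists_adj_forall_adj_eq {W : Type*} [Finite W] {H : SimpleGraph W}
    (hH : H.IsAcyclic) {a b : W} (hab : H.Adj a b) :
    ∃ x y, H.Adj x y ∧ ∀ z, H.Adj x z → z = y := by
  classical
  have := Fintype.ofFinite W
  set C := H.connectedComponentMk a
  have hb : b ∈ C.supp := ConnectedComponent.connectedComponentMk_eq_of_adj hab.symm
  have : Nontrivial C := ⟨⟨a, rfl⟩, ⟨b, hb⟩, fun h => hab.ne (congrArg Subtype.val h)⟩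
  obtain ⟨x, hx⟩ := (hH.isTree_connectedComponent C).exists_vert_degree_one_of_nontrivial
  obtain ⟨y, hxy, hy⟩ := degree_eq_one_iff_existsUnique_adj.1 hx
  refine ⟨x, y, hxy, fun z hz => ?_⟩
  have hz' : z ∈ C.supp := (ConnectedComponent.connectedComponentMk_eq_of_adj hz).symm.trans x.2
  exact congrArg Subtype.val (hy ⟨z, hz'⟩ hz)

theorem SimpleGraph.mem_incidenceSet_deleteIncidenceSet {W : Type*} {G : SimpleGraph W}
    {x w : W} {e : Sym2 W} :
    e ∈ (G.deleteIncidenceSet x).incidenceSet w ↔ e ∈ G.incidenceSet w ∧ x ∉ e := by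
  simp only [incidenceSet, edgeSet_deleteIncidenceSet, Set.mem_sdiff, Set.mem_ofPred_eq]
  tauto

def IsMonochromaticAt {W : Type*} (G : SimpleGraph W) {k : ℕ} (f : Sym2 W → Fin k) (w : W) :
    Prop :=
  ∃ c, ∀ e ∈ G.incidenceSet w, f e = c

section OddAt

variable {G G' : SimpleGraph V} [DecidableRel G.Adj] [DecidableRel G'.Adj] {k : ℕ}
  {f f' : Sym2 V → Fin k} {w : V}

theorem oddAt_congr (hI : G.incidenceSet w = G'.incidenceSet w)
    (hf : Set.EqOn f f' (G.incidenceSet w)) : OddAt G f w ↔ OddAt G' f' w := by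
  have hI' : G.incidenceFinset w = G'.incidenceFinset w := by ext; simp [hI]
  have hcount (i : Fin k) : colorCount G f w i = colorCount G' f' w i := by
    unfold colorCount
    rw [← hI']
    exact congrArg card (filter_congr fun e he => by rw [hf ((G.mem_incidenceFinset w e).1 he)])
  simp only [OddAt, hcount]

theorem oddAt_of_degree_le_one_s2 (h : G.degree w ≤ 1) : OddAt G f w := by
  intro i
  have : colorCount G f w i ≤ 1 :=
    ((card_filter_le _ _).trans (card_incidenceFinset_eq_degree G w).le).trans h
  interval_cases colorCount G f w i <;> simp

theorem colorCount_eq_zero_of_forall_ne {i : Fin k} (h : ∀ e ∈ G.incidenceSet w, f e ≠ i) :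
    colorCount G f w i = 0 := by
  simpa [colorCount, filter_eq_empty_iff] using h

theorem oddAt_of_forall_eq {c : Fin k} (h : ∀ e ∈ G.incidenceSet w, f e = c)
    (hodd : Odd (G.degree w)) : OddAt G f w := by
  intro i
  by_cases hi : i = c
  · subst hi
    right
    rwa [colorCount, filter_true_of_mem fun e he => h e ((G.mem_incidenceFinset w e).1 he),
      card_incidenceFinset_eq_degree]
  · exact Or.inl (colorCount_eq_zero_of_forall_ne fun e he => by rw [h e he]; exact Ne.symm hi)

theorem oddAt_of_forall_ne_eq {c : Fin k} {e₀ : Sym2 V} (he₀ : e₀ ∈ G.incidenceSet w)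
    (h : ∀ e ∈ G.incidenceSet w, e ≠ e₀ → f e = c) (hne : f e₀ ≠ c)
    (heven : Even (G.degree w)) : OddAt G f w := by
  have he₀' : e₀ ∈ G.incidenceFinset w := (G.mem_incidenceFinset w e₀).2 he₀
  intro i
  by_cases hic : i = c
  · subst hic
    right
    have : (G.incidenceFinset w).filter (fun e => f e = i) = (G.incidenceFinset w).erase e₀ := by
      ext e
      simp only [mem_filter, mem_erase, mem_incidenceFinset]
      exact ⟨fun ⟨he, hfe⟩ => ⟨fun h' => hne (h' ▸ hfe), he⟩, fun ⟨hne', he⟩ => ⟨he, h e he hne'⟩⟩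
    rw [colorCount, this, card_erase_of_mem he₀', card_incidenceFinset_eq_degree]
    have hpos : 0 < G.degree w := card_incidenceFinset_eq_degree G w ▸ card_pos.2 ⟨e₀, he₀'⟩
    exact Nat.Even.sub_odd hpos heven odd_one
  by_cases hi : i = f e₀
  · subst hi
    right
    have : (G.incidenceFinset w).filter (fun e => f e = f e₀) = {e₀} := by
      ext e
      simp only [mem_filter, mem_singleton, mem_incidenceFinset]
      refine ⟨fun ⟨he, hfe⟩ => by_contra fun h' => hic (hfe ▸ h e he h'), ?_⟩
      rintro rfl
      exact ⟨he₀, rfl⟩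
    rw [colorCount, this, card_singleton]
    exact odd_one
  · left
    refine colorCount_eq_zero_of_forall_ne fun e he hfe => ?_
    by_cases h' : e = e₀
    · exact hi (hfe.symm.trans (congrArg f h'))
    · exact hic (hfe.symm.trans (h e he h'))

end OddAt

theorem exists_fin_two_eq_iff (b : Fin 2) (P : Prop) : ∃ a : Fin 2, a = b ↔ P := by
  by_cases hP : P
  · exact ⟨b, by simp [hP]⟩
  · exact ⟨b + 1, by simp only [hP, iff_false]; revert b; decide⟩

theorem isMonochromaticAt_and_oddAt_of_forall_ne_eq {G : SimpleGraph V} [DecidableRel G.Adj]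
    {k : ℕ} {f : Sym2 V → Fin k} {w : V} {M : Set V} {b : Fin k} {e₀ : Sym2 V}
    (he₀ : e₀ ∈ G.incidenceSet w) (h : ∀ e ∈ G.incidenceSet w, e ≠ e₀ → f e = b)
    (hsame : f e₀ = b ↔ w ∈ M ∨ Odd (G.degree w)) :
    (w ∈ M → IsMonochromaticAt G f w) ∧ (w ∉ M → OddAt G f w) := by
  by_cases hb : f e₀ = b
  · have hmono : ∀ e ∈ G.incidenceSet w, f e = b := fun e he =>
      if he' : e = e₀ then he' ▸ hb else h e he he'
    exact ⟨fun _ => ⟨b, hmono⟩, fun hw => oddAt_of_forall_eq hmono ((hsame.1 hb).resolve_left hw)⟩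
  · obtain ⟨hwM, hdeg⟩ := not_or.1 (hb ∘ hsame.2)
    exact ⟨fun hw => absurd hw hwM,
      fun _ => oddAt_of_forall_ne_eq he₀ h hb (Nat.not_odd_iff_even.1 hdeg)⟩

def IsMonoOnOddOff (G : SimpleGraph V) [DecidableRel G.Adj] (v : V) (M : Set V)
    (f : Sym2 V → Fin 2) : Prop :=
  ∀ w ≠ v, (w ∈ M → IsMonochromaticAt G f w) ∧ (w ∉ M → OddAt G f w)

theorem exists_isMonoOnOddOff_of_deleteIncidenceSet {G : SimpleGraph V} [DecidableRel G.Adj]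
    {v l p : V} {M : Set V} (hlp : G.Adj l p) (hleaf : ∀ z, G.Adj l z → z = p ∨ z = v)
    (hp : p ≠ v) {f' : Sym2 V → Fin 2}
    (hf' : IsMonoOnOddOff (G.deleteIncidenceSet l) v (insert p M) f') :
    ∃ f, IsMonoOnOddOff G v M f := by
  obtain ⟨c, hc⟩ := (hf' p hp).1 (Set.mem_insert p M)
  obtain ⟨γ, hγ⟩ := exists_fin_two_eq_iff c (p ∈ M ∨ Odd (G.degree p))
  obtain ⟨δ, hδ⟩ := exists_fin_two_eq_iff γ (l ∈ M ∨ Odd (G.degree l))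
  set f : Sym2 V → Fin 2 := fun e => if l ∈ e then (if p ∈ e then γ else δ) else f' e
  refine ⟨f, fun w hw => ?_⟩
  rcases eq_or_ne w l with rfl | hwl
  · refine isMonochromaticAt_and_oddAt_of_forall_ne_eq ((G.mem_incidenceSet w p).2 hlp)
      (fun e he hne => ?_) (by simpa [f, eq_comm] using hδ)
    have hpe : p ∉ e := fun hpe => hne ((Sym2.mem_and_mem_iff hlp.ne).1 ⟨he.2, hpe⟩)
    simp [f, he.2, hpe]
  rcases eq_or_ne w p with rfl | hwp
  · refine isMonochromaticAt_and_oddAt_of_forall_ne_eq ((G.mem_incidenceSet w l).2 hlp.symm)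
      (fun e he hne => ?_) (by simpa [f] using hγ)
    have hle : l ∉ e := fun hle => hne ((Sym2.mem_and_mem_iff hlp.ne.symm).1 ⟨he.2, hle⟩)
    simpa [f, hle] using hc e (mem_incidenceSet_deleteIncidenceSet.2 ⟨he, hle⟩)
  have hle (e : Sym2 V) (he : e ∈ G.incidenceSet w) : l ∉ e := fun hle => by
    have hwl' : G.Adj w l :=
      (G.mem_incidenceSet w l).1 ((Sym2.mem_and_mem_iff hwl).1 ⟨he.2, hle⟩ ▸ he)
    exact (hleaf w hwl'.symm).elim hwp hw
  have hI : (G.deleteIncidenceSet l).incidenceSet w = G.incidenceSet w :=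
    Set.ext fun e => mem_incidenceSet_deleteIncidenceSet.trans (and_iff_left_of_imp (hle e))
  have hf : Set.EqOn f f' (G.incidenceSet w) := fun e he => if_neg (hle e he)
  have hM : w ∈ insert p M ↔ w ∈ M := by simp [hwp]
  obtain ⟨hmono, hodd⟩ := hf' w hw
  refine ⟨fun hwM => ?_, fun hwM => (oddAt_congr hI.symm hf).2 (hodd (hwM ∘ hM.1))⟩
  obtain ⟨c', hc'⟩ := hmono (hM.2 hwM)
  exact ⟨c', fun e he => (hf he).trans (hc' e (hI ▸ he))⟩

theorem exists_isMonoOnOddOff (v : V) (G : SimpleGraph V) [DecidableRel G.Adj]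
    (hF : (G.induce ({v}ᶜ : Set V)).IsAcyclic) (M : Set V) : ∃ f, IsMonoOnOddOff G v M f := by
  revert ‹DecidableRel G.Adj› hF M
  induction G using WellFoundedLT.induction with | _ G ih => ?_
  intro _ hF M
  by_cases hedge : ∃ x y, x ≠ v ∧ y ≠ v ∧ G.Adj x y
  · obtain ⟨x, y, hx, hy, hxy⟩ := hedge
    obtain ⟨⟨l, hl⟩, ⟨p, hp⟩, hlp, hleaf⟩ :=
      hF.exists_adj_forall_adj_eq (a := ⟨x, hx⟩) (b := ⟨y, hy⟩) hxy
    replace hlp : G.Adj l p := hlp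
    have hleaf' (z : V) (hz : G.Adj l z) : z = p ∨ z = v :=
      or_iff_not_imp_right.2 fun hzv => congrArg Subtype.val (hleaf ⟨z, hzv⟩ hz)
    have hlt : G.deleteIncidenceSet l < G := lt_of_le_of_ne (deleteIncidenceSet_le G l)
      (ne_of_apply_ne (·.Adj l p) (by simp [deleteIncidenceSet_adj, hlp]))
    obtain ⟨f', hf'⟩ := ih _ hlt (hF.anti fun _ _ h => deleteIncidenceSet_le G l h) (insert p M)
    exact exists_isMonoOnOddOff_of_deleteIncidenceSet hlp hleaf' hp hf'
  · push Not at hedge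
    refine ⟨fun _ => 0, fun w hw => ⟨fun _ => ⟨0, fun _ _ => rfl⟩, fun _ => ?_⟩⟩
    refine oddAt_of_degree_le_one_s2 ?_
    have : G.neighborFinset w ⊆ {v} := fun z hz => mem_singleton.2 <|
      by_contra fun hzv => hedge w z hw hzv ((G.mem_neighborFinset w z).1 hz)
    exact (card_neighborFinset_eq_degree G w) ▸ (card_le_card this).trans (card_singleton v).le

theorem odd_away_from_v_of_deleteVertex_forest (G : SimpleGraph V) [DecidableRel G.Adj]
    (v : V) (hF : (G.induce ({v}ᶜ : Set V)).IsAcyclic) :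
    ∃ f : Sym2 V → Fin 2, ∀ w : V, w ≠ v → OddAt G f w := by
  obtain ⟨f, hf⟩ := exists_isMonoOnOddOff v G hF ∅
  exact ⟨f, fun w hw => (hf w hw).2 (Set.notMem_empty w)⟩
end

section
/- If v is a vertex of odd degree in a graph G such that G − v is a forest, then G admits an edge-coloring with colors {1,2} that is odd at every vertex other than v, and such that at v the number of edges colored 1 is odd and the number of edges colored 2 is even. -/
open SimpleGraph Finset

variable {V : Type*} [Fintype V] [DecidableEq V]

/-!
Let every vertex `w` of positive even degree pick a neighbour `d w`, and colour the edge `wu`, as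
seen from `w ≠ v`, by `b w + [deg w even ∧ u = d w]` for a vertex labelling `b : V → ZMod 2`.
Then a vertex `w ≠ v` of odd degree sees one colour only, and one of even degree sees one edge of
one colour and `deg w - 1` of the other, so the colouring is odd away from `v`. The two ends of
an edge `xy` of the forest `G - v` agree on its colour iff `b x + b y` is the sum of their two
brackets, and on a forest every edge labelling is such a coboundary `b x + b y`. Finally `b` may
be flipped on any component of `G - v`; flipping it on one that contains an odd number of
neighbours of `v` (there is one, as `deg v` is odd) changes the parity of colour `1` at `v`.
-/

namespace SimpleGraph

section Potential

variable {W : Type*} {H : SimpleGraph W} {δ : Sym2 W → ZMod 2} {b : W → ZMod 2}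

def IsPotential (H : SimpleGraph W) (δ : Sym2 W → ZMod 2) (b : W → ZMod 2) : Prop :=
  ∀ ⦃x y⦄, H.Adj x y → b x + b y = δ s(x, y)

theorem IsPotential.add_comp_connectedComponentMk (hb : H.IsPotential δ b)
    (t : H.ConnectedComponent → ZMod 2) :
    H.IsPotential δ (fun z => b z + t (H.connectedComponentMk z)) := by
  intro x y hxy
  have := hb hxy
  simp only [ConnectedComponent.sound hxy.reachable]
  grind

variable (δ) in
theorem IsAcyclic.exists_isPotential_fromEdgeSet (hH : H.IsAcyclic) (s : Finset (Sym2 W))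
    (hs : ↑s ⊆ H.edgeSet) : ∃ b, (fromEdgeSet ↑s).IsPotential δ b := by
  classical
  induction s using Finset.induction_on with
  | empty => exact ⟨0, fun x y h => by simp at h⟩
  | insert e s he ih =>
    obtain ⟨b, hb⟩ := ih (subset_trans (by simp) hs)
    induction e using Sym2.ind with | _ x y => ?_
    -- `xy` is a bridge, so flipping `b` on the component of `y` in `K` only affects `xy`.
    set K := fromEdgeSet (s : Set (Sym2 W))
    have hK : K ≤ H.deleteEdges {s(x, y)} := fun p q hpq => by
      rw [fromEdgeSet_adj] at hpq
      exact deleteEdges_adj.mpr ⟨hs (coe_subset.mpr (subset_insert _ _) hpq.1),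
        fun h => he (Set.mem_singleton_iff.mp h ▸ hpq.1)⟩
    have hxy : K.connectedComponentMk x ≠ K.connectedComponentMk y := fun h =>
      isBridge_iff.mp (isAcyclic_iff_forall_isBridge.mp hH (hs (by simp)))
        ((ConnectedComponent.eq.mp h).mono hK)
    set t : K.ConnectedComponent → ZMod 2 := fun C =>
      if C = K.connectedComponentMk y then b x + b y + δ s(x, y) else 0
    refine ⟨fun z => b z + t (K.connectedComponentMk z), fun p q hpq => ?_⟩
    rw [fromEdgeSet_adj, Finset.coe_insert, Set.mem_insert_iff] at hpq
    obtain ⟨hpq | hpq, hne⟩ := hpq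
    · rcases Sym2.eq_iff.mp hpq with ⟨rfl, rfl⟩ | ⟨rfl, rfl⟩ <;>
        simp only [t, hxy, if_false, if_true] <;> grind
    · exact hb.add_comp_connectedComponentMk _ (fromEdgeSet_adj _ |>.mpr ⟨hpq, hne⟩)

variable (δ) in
theorem IsAcyclic.exists_isPotential [Finite W] (hH : H.IsAcyclic) :
    ∃ b, H.IsPotential δ b := by
  simpa using hH.exists_isPotential_fromEdgeSet δ H.edgeSet.toFinite.toFinset (by simp)

theorem IsPotential.exists_sum_eq (hb : H.IsPotential δ b) {s : Finset W} (hs : Odd #s)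
    (a : ZMod 2) : ∃ b', H.IsPotential δ b' ∧ ∑ u ∈ s, b' u = a := by
  classical
  by_cases hsum : ∑ u ∈ s, b u = a
  · exact ⟨b, hb, hsum⟩
  obtain ⟨C, -, hC⟩ : ∃ C ∈ s.image H.connectedComponentMk,
      ∑ u ∈ s with H.connectedComponentMk u = C, (1 : ZMod 2) ≠ 0 := by
    refine exists_ne_zero_of_sum_ne_zero ?_
    convert_to ∑ u ∈ s, (1 : ZMod 2) ≠ 0 using 2
    · exact sum_fiberwise_of_maps_to (fun u hu => mem_image_of_mem _ hu) _
    rwa [sum_const, nsmul_one, Ne, ZMod.natCast_eq_zero_iff_even, Nat.not_even_iff_odd]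
  refine ⟨_, hb.add_comp_connectedComponentMk fun D => if D = C then 1 else 0, ?_⟩
  rw [sum_add_distrib, ← sum_filter]
  have key : ∀ x y a : ZMod 2, x ≠ a → y ≠ 0 → x + y = a := by decide
  exact key _ _ _ hsum hC

variable (δ) in
theorem IsAcyclic.exists_isPotential_sum_eq [Finite W] (hH : H.IsAcyclic)
    {s : Finset W} (hs : Odd #s) (a : ZMod 2) :
    ∃ b, H.IsPotential δ b ∧ ∑ u ∈ s, b u = a :=
  (hH.exists_isPotential δ).elim fun _ hb => hb.exists_sum_eq hs a

end Potential

theorem IsAcyclic.exists_isPotential_deleteIncidenceSet_sum_eq {α : Type*} [Finite α]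
    {G : SimpleGraph α} {v : α} (hF : (G.induce {v}ᶜ).IsAcyclic) (δ : Sym2 α → ZMod 2)
    {s : Finset α} (hv : v ∉ s) (hs : Odd #s) (a : ZMod 2) :
    ∃ b, (G.deleteIncidenceSet v).IsPotential δ b ∧ ∑ u ∈ s, b u = a := by
  classical
  have hsv : ∀ u ∈ s, u ∈ ({v}ᶜ : Set α) := fun u hu => by rintro rfl; exact hv hu
  obtain ⟨b, hb, hsum⟩ := hF.exists_isPotential_sum_eq (δ ∘ Sym2.map Subtype.val)
    (s := s.subtype (· ∈ ({v}ᶜ : Set α))) (by rwa [card_subtype, filter_true_of_mem hsv]) a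
  refine ⟨fun w => if hw : w ∈ ({v}ᶜ : Set α) then b ⟨w, hw⟩ else 0, ?_, ?_⟩
  · intro x y hxy
    rw [deleteIncidenceSet_adj] at hxy
    simpa [hxy.2.1, hxy.2.2] using hb (x := ⟨x, hxy.2.1⟩) (y := ⟨y, hxy.2.2⟩) hxy.1
  · rw [← hsum, ← sum_subtype_of_mem _ hsv]
    exact sum_congr rfl fun u _ => dif_pos u.2

theorem IsPotential.exists_sym2_eq_add {α : Type*} {G : SimpleGraph α} {v : α}
    {τ : α → α → ZMod 2} {b : α → ZMod 2}
    (hb : (G.deleteIncidenceSet v).IsPotential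
      (Sym2.lift ⟨fun x y => τ x y + τ y x, fun _ _ => add_comm _ _⟩) b) :
    ∃ f : Sym2 α → ZMod 2,
      ∀ ⦃w u⦄, G.Adj w u → w ≠ v → f s(w, u) = b w + τ w u := by
  classical
  refine ⟨Sym2.lift ⟨fun x y => if G.Adj x y then
    (if x = v then b y + τ y x else b x + τ x y) else 0, fun x y => ?_⟩, fun w u hwu hw => ?_⟩
  · by_cases hxy : G.Adj x y
    · have := @hb x y
      simp only [deleteIncidenceSet_adj, Sym2.lift_mk] at this
      simp only [hxy, hxy.symm, if_true]
      split_ifs <;> grind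
    · simp only [hxy, show ¬G.Adj y x from fun h => hxy h.symm, if_false]
  · simp [hwu, hw]

end SimpleGraph

section OddColoring

variable (G : SimpleGraph V) [DecidableRel G.Adj]

theorem colorCount_eq_card_filter_neighborFinset {k : ℕ} (f : Sym2 V → Fin k) (w : V)
    (i : Fin k) :
    colorCount G f w i = #{u ∈ G.neighborFinset w | f s(w, u) = i} := by
  refine (card_nbij (fun u => s(w, u)) (fun u hu => ?_) (fun _ _ _ _ h => Sym2.congr_right.mp h)
    fun e he => ?_).symm
  · simp_all
  · induction e using Sym2.ind with | _ x y => ?_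
    simp only [coe_filter, mem_incidenceFinset, mk'_mem_incidenceSet_iff, Set.mem_ofPred_eq] at he
    obtain ⟨⟨hxy, rfl | rfl⟩, hc⟩ := he
    · exact ⟨y, by simp [hxy, hc]⟩
    · rw [Sym2.eq_swap] at hc
      exact ⟨x, by simp [hxy.symm, hc], Sym2.eq_swap⟩

theorem colorCount_zero_add_colorCount_one (f : Sym2 V → Fin 2) (w : V) :
    colorCount G f w 0 + colorCount G f w 1 = G.degree w := by
  simp only [colorCount_eq_card_filter_neighborFinset, ← card_neighborFinset_eq_degree]
  rw [← card_filter_add_card_filter_not (s := G.neighborFinset w) (fun u => f s(w, u) = 0)]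
  congr 2
  refine filter_congr fun u _ => ?_
  generalize f s(w, u) = c
  revert c
  decide

-- `k` is explicit because unifying `Fin ?k` with `ZMod 2` yields `Fin (1 + 1)`.
theorem natCast_colorCount_one (f : Sym2 V → ZMod 2) (w : V) :
    (colorCount (k := 2) G f w 1 : ZMod 2) = ∑ u ∈ G.neighborFinset w, f s(w, u) := by
  rw [show colorCount (k := 2) G f w 1 = _ from colorCount_eq_card_filter_neighborFinset G f w 1,
    ← sum_boole]
  refine sum_congr rfl fun u _ => ?_
  generalize f s(w, u) = c
  revert c
  decide

variable {G}

theorem oddAt_of_degree_eq_zero {k : ℕ} (f : Sym2 V → Fin k) {w : V} (hw : G.degree w = 0) :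
    OddAt G f w := fun _ =>
  Or.inl <| Nat.le_zero.mp <|
    hw ▸ (card_filter_le _ _).trans (G.card_incidenceFinset_eq_degree w).le

theorem oddAt_of_forall_adj_eq {k : ℕ} {f : Sym2 V → Fin k} {w : V} {a : Fin k}
    (hw : Odd (G.degree w)) (hf : ∀ u, G.Adj w u → f s(w, u) = a) : OddAt G f w := by
  intro i
  rw [colorCount_eq_card_filter_neighborFinset]
  by_cases hi : a = i
  · rw [filter_true_of_mem fun u hu => hi ▸ hf u ((mem_neighborFinset _ _ _).mp hu),
      card_neighborFinset_eq_degree]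
    exact Or.inr hw
  · refine Or.inl (card_eq_zero.mpr (filter_eq_empty_iff.mpr fun u hu => ?_))
    rw [hf u ((mem_neighborFinset _ _ _).mp hu)]
    exact hi

theorem oddAt_of_forall_adj_ne_eq {k : ℕ} {f : Sym2 V → Fin k} {w u₀ : V} {a : Fin k}
    (hw : Even (G.degree w)) (hu₀ : G.Adj w u₀) (hf₀ : f s(w, u₀) ≠ a)
    (hf : ∀ u, G.Adj w u → u ≠ u₀ → f s(w, u) = a) : OddAt G f w := by
  have hmem : u₀ ∈ G.neighborFinset w := (mem_neighborFinset _ _ _).mpr hu₀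
  intro i
  rw [colorCount_eq_card_filter_neighborFinset]
  by_cases hi : a = i
  · subst hi
    have : {u ∈ G.neighborFinset w | f s(w, u) = a} = (G.neighborFinset w).erase u₀ := by
      ext u
      simp only [mem_filter, mem_erase, mem_neighborFinset]
      exact ⟨fun h => ⟨fun hu => hf₀ (hu ▸ h.2), h.1⟩, fun h => ⟨h.2, hf u h.2 h.1⟩⟩
    rw [this, card_erase_of_mem hmem, card_neighborFinset_eq_degree]
    refine Or.inr (Nat.Even.sub_odd ?_ hw odd_one)
    exact card_neighborFinset_eq_degree G w ▸ card_pos.mpr ⟨u₀, hmem⟩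
  by_cases hi₀ : f s(w, u₀) = i
  · have : {u ∈ G.neighborFinset w | f s(w, u) = i} = {u₀} := by
      ext u
      simp only [mem_filter, mem_singleton, mem_neighborFinset]
      refine ⟨fun h => ?_, fun h => h ▸ ⟨hu₀, hi₀⟩⟩
      by_contra hu
      exact hi (hf u h.1 hu ▸ h.2)
    rw [this, card_singleton]
    exact Or.inr odd_one
  · refine Or.inl (card_eq_zero.mpr (filter_eq_empty_iff.mpr fun u hu => ?_))
    by_cases hne : u = u₀
    · exact hne ▸ hi₀
    · rw [hf u ((mem_neighborFinset _ _ _).mp hu) hne]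
      exact hi

theorem oddAt_of_forall_adj_eq_add_ite {f : Sym2 V → ZMod 2} {w d : V} (β : ZMod 2)
    (hd : G.degree w ≠ 0 → G.Adj w d)
    (hf : ∀ u, G.Adj w u → f s(w, u) = β + if Even (G.degree w) ∧ u = d then 1 else 0) :
    OddAt (k := 2) G f w := by
  rcases Nat.even_or_odd (G.degree w) with hw | hw
  · by_cases h0 : G.degree w = 0
    · exact oddAt_of_degree_eq_zero f h0
    refine oddAt_of_forall_adj_ne_eq hw (hd h0) (a := β) ?_ fun u hu hne => ?_
    · rw [hf d (hd h0), if_pos ⟨hw, rfl⟩]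
      exact add_ne_left.mpr one_ne_zero
    · rw [hf u hu, if_neg fun h => hne h.2, add_zero]
  · refine oddAt_of_forall_adj_eq hw (a := β) fun u hu => ?_
    rw [hf u hu, if_neg fun h => Nat.not_even_iff_odd.mpr hw h.1, add_zero]

end OddColoring

theorem odd_away_with_parity_at_v (G : SimpleGraph V) [DecidableRel G.Adj]
    (v : V) (hF : (G.induce ({v}ᶜ : Set V)).IsAcyclic) (hdeg : Odd (G.degree v)) :
    ∃ f : Sym2 V → Fin 2, (∀ w : V, w ≠ v → OddAt G f w) ∧
      Odd (colorCount G f v 0) ∧ Even (colorCount G f v 1) := by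
  choose d hd using fun w => show ∃ u, G.degree w ≠ 0 → G.Adj w u by
    by_cases h : G.degree w = 0
    · exact ⟨w, (absurd h ·)⟩
    · exact ((G.degree_pos_iff_exists_adj w).mp (Nat.pos_of_ne_zero h)).imp fun _ hu _ => hu
  let τ : V → V → ZMod 2 := fun w u => if Even (G.degree w) ∧ u = d w then 1 else 0
  obtain ⟨b, hb, hsum⟩ := hF.exists_isPotential_deleteIncidenceSet_sum_eq _
    (s := G.neighborFinset v) (by simp) (by rwa [card_neighborFinset_eq_degree])
    (∑ u ∈ G.neighborFinset v, τ u v)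
  obtain ⟨f, hf⟩ := hb.exists_sym2_eq_add
  have heven : Even (colorCount G f v 1) := by
    rw [← ZMod.natCast_eq_zero_iff_even, natCast_colorCount_one]
    calc ∑ u ∈ G.neighborFinset v, f s(v, u)
        = ∑ u ∈ G.neighborFinset v, (b u + τ u v) := sum_congr rfl fun u hu => by
          rw [mem_neighborFinset] at hu
          rw [Sym2.eq_swap, hf hu.symm hu.ne']
      _ = 0 := by rw [sum_add_distrib, hsum]; grind
  refine ⟨f, fun w hw => oddAt_of_forall_adj_eq_add_ite (b w) (hd w) fun u hu => hf hu hw,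
    ?_, heven⟩
  exact (Nat.odd_add.mp (colorCount_zero_add_colorCount_one G f v ▸ hdeg)).mpr heven
end

section
/- Let G be a connected graph and T an even-sized subset of its vertex set. Then there exists a T-join H of G whose edge-complement G − E(H) is a forest. -/
/-!
Choose a spanning tree `F` of `G`. The co-tree graph `C = G - F` is a join of its own set `S`
of odd-degree vertices, and `|S|` is even by the handshake lemma, so `|S ∆ T|` is even too.
The tree `F` is connected, hence contains an `(S ∆ T)`-join `J` (a symmetric difference of
paths pairing off the vertices of `S ∆ T`). Then `H = C ∪ J` is a `T`-join, and
`G - H = F - J` is a forest.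
-/

open SimpleGraph Finset

variable {V : Type*} [Fintype V] [DecidableEq V]

open scoped symmDiff

section

variable {α : Type*}

theorem Set.ncard_symmDiff_add_two_mul_ncard_inter {s t : Set α}
    (hs : s.Finite := by toFinite_tac) (ht : t.Finite := by toFinite_tac) :
    (s ∆ t).ncard + 2 * (s ∩ t).ncard = s.ncard + t.ncard := by
  have hsub : s ∩ t ⊆ s ∪ t := Set.inter_subset_left.trans Set.subset_union_left
  rw [symmDiff_eq_sup_sdiff_inf, ← Set.ncard_union_add_ncard_inter s t hs ht]
  have := Set.ncard_sdiff_add_ncard_of_subset hsub (hs.union ht)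
  simp only [Set.sup_eq_union, Set.inf_eq_inter] at *
  omega

theorem Set.odd_ncard_symmDiff {s t : Set α} (hs : s.Finite := by toFinite_tac)
    (ht : t.Finite := by toFinite_tac) :
    Odd (s ∆ t).ncard ↔ Xor (Odd s.ncard) (Odd t.ncard) := by
  have := Set.ncard_symmDiff_add_two_mul_ncard_inter hs ht
  simp only [Nat.odd_iff, xor_def]
  omega

end

namespace SimpleGraph

variable {W : Type*}

def IsTJoin (H : SimpleGraph W) (T : Set W) : Prop :=
  ∀ v, Odd (H.neighborSet v).ncard ↔ v ∈ T

theorem isTJoin_bot : (⊥ : SimpleGraph W).IsTJoin ∅ :=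
  fun _ => by simp

theorem IsTJoin.symmDiff [Finite W] {A B : SimpleGraph W} {S T : Set W} (hA : A.IsTJoin S)
    (hB : B.IsTJoin T) : (A ∆ B).IsTJoin (S ∆ T) := by
  intro v
  change Odd (A.neighborSet v ∆ B.neighborSet v).ncard ↔ _
  rw [Set.odd_ncard_symmDiff, hA v, hB v]
  rfl

theorem Walk.IsPath.isTJoin_spanningCoe_toSubgraph {G : SimpleGraph W} {u v : W} {p : G.Walk u v}
    (hp : p.IsPath) (huv : u ≠ v) : p.toSubgraph.spanningCoe.IsTJoin {u, v} := by
  have hnil : ¬p.Nil := Walk.not_nil_of_ne huv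
  intro w
  change Odd (p.toSubgraph.neighborSet w).ncard ↔ w ∈ ({u, v} : Set W)
  by_cases hw : w ∈ p.support
  · obtain ⟨i, rfl, hi⟩ := Walk.mem_support_iff_exists_getVert.mp hw
    rw [Set.mem_insert_iff, Set.mem_singleton_iff, hp.getVert_eq_start_iff hi,
      hp.getVert_eq_end_iff hi]
    rcases Nat.eq_zero_or_pos i with rfl | hi0
    · simp [hp.neighborSet_toSubgraph_startpoint hnil]
    rcases hi.eq_or_lt with rfl | hlt
    · simp [hp.neighborSet_toSubgraph_endpoint hnil]
    · rw [hp.ncard_neighborSet_toSubgraph_internal_eq_two hi0.ne' hlt]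
      exact iff_of_false (by decide) (by omega)
  · have : p.toSubgraph.neighborSet w = ∅ :=
      Set.eq_empty_of_forall_notMem fun x hx => hw (p.mem_verts_toSubgraph.mp hx.fst_mem)
    rw [this, Set.ncard_empty]
    exact iff_of_false (by decide) (by rintro (rfl | rfl) <;> simp at hw)

theorem Connected.exists_isTJoin_le [Finite W] {G : SimpleGraph W} (hG : G.Connected)
    {T : Set W} (hT : Even T.ncard) : ∃ J ≤ G, J.IsTJoin T := by
  induction hn : T.ncard using Nat.strong_induction_on generalizing T with
  | _ n ih =>
  rcases T.eq_empty_or_nonempty with rfl | hne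
  · exact ⟨⊥, bot_le, isTJoin_bot⟩
  have hn2 : 2 ≤ n := by
    have := (Set.ncard_pos (Set.toFinite T)).mpr hne
    obtain ⟨k, hk⟩ := hT
    omega
  obtain ⟨u, v, hu, hv, huv⟩ := (Set.one_lt_ncard_iff (Set.toFinite T)).mp (by omega)
  have huvT : {u, v} ⊆ T := Set.insert_subset hu (Set.singleton_subset_iff.mpr hv)
  have hcard : (T \ {u, v}).ncard = n - 2 := by
    rw [Set.ncard_sdiff huvT, Set.ncard_pair huv, hn]
  obtain ⟨J, hJG, hJ⟩ := ih (n - 2) (by omega) (by rw [hcard]; grind) hcard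
  obtain ⟨p, hp⟩ := (hG.preconnected u v).exists_isPath
  refine ⟨J ∆ p.toSubgraph.spanningCoe, symmDiff_le ?_ ?_, ?_⟩
  · exact le_sup_of_le_right hJG
  · exact le_sup_of_le_right p.toSubgraph.spanningCoe_le
  · simpa [sdiff_symmDiff_eq_sup, huvT] using hJ.symmDiff (hp.isTJoin_spanningCoe_toSubgraph huv)

theorem exists_even_ncard_isTJoin [Finite W] (G : SimpleGraph W) :
    ∃ S : Set W, Even S.ncard ∧ G.IsTJoin S := by
  classical
  have := Fintype.ofFinite W
  refine ⟨{v | Odd (G.neighborSet v).ncard}, ?_, fun _ => Iff.rfl⟩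
  convert G.even_card_odd_degree_vertices using 1
  rw [← Set.ncard_coe_finset]
  congr
  ext v
  simp [← card_neighborSet_eq_degree, Set.ncard_eq_toFinset_card']

end SimpleGraph

theorem exists_Tjoin_coforest (G : SimpleGraph V) (hG : G.Connected)
    (T : Finset V) (hT : Even T.card) :
    ∃ H : SimpleGraph V, H ≤ G ∧ (∀ v ∈ T, Odd (H.neighborSet v).ncard) ∧
      (∀ v ∉ T, Even (H.neighborSet v).ncard) ∧ (G \ H).IsAcyclic := by
  obtain ⟨F, hFG, hF⟩ := hG.exists_isTree_le
  obtain ⟨S, hS, hC⟩ := (G \ F).exists_even_ncard_isTJoin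
  have hST : Even (S ∆ T).ncard := by
    rw [← Nat.not_odd_iff_even, Set.odd_ncard_symmDiff, ← Nat.not_even_iff_odd,
      ← Nat.not_even_iff_odd, Set.ncard_coe_finset]
    simp [hS, hT]
  obtain ⟨J, hJF, hJ⟩ := hF.connected.exists_isTJoin_le hST
  have hH : (G \ F ⊔ J).IsTJoin T := by
    rw [← (disjoint_sdiff_self_left.mono_right hJF).symmDiff_eq_sup]
    simpa only [symmDiff_symmDiff_cancel_left] using hC.symmDiff hJ
  refine ⟨G \ F ⊔ J, sup_le sdiff_le (hJF.trans hFG), fun v hv => (hH v).2 hv,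
    fun v hv => Nat.not_odd_iff_even.mp (mt (hH v).1 hv), hF.isAcyclic.anti ?_⟩
  calc G \ (G \ F ⊔ J) ≤ G \ (G \ F) := sdiff_le_sdiff_left le_sup_left
    _ ≤ F := by simp
end

section
/- Every connected graph of even order contains a spanning subgraph H such that every vertex has odd degree in H and the edge-complement G − E(H) is acyclic. -/
open SimpleGraph Finset

variable {V : Type*} [Fintype V] [DecidableEq V]

/-! Prescribe instead an arbitrary set `S` of even size for the odd-degree vertices of `H`.
While `G` has a cycle, delete one of its edges `ab` (connectivity survives), solve the problem
for `G - ab` and `S ∆ {a, b}`, and add `ab` to `H`. Once `G` is a tree, `G \ H` is acyclic for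
every `H ≤ G`, and `H` can be taken to be the symmetric difference of paths joining the vertices
of `S` in pairs: the odd-degree set of a symmetric difference of graphs is the symmetric
difference of their odd-degree sets. -/

open scoped symmDiff

namespace Set

variable {α : Type*}

theorem even_ncard_symmDiff {s t : Set α} (hs : s.Finite := by toFinite_tac)
    (ht : t.Finite := by toFinite_tac) : Even (s ∆ t).ncard ↔ (Even s.ncard ↔ Even t.ncard) := by
  have hdiff : (s ∆ t).ncard + (s ∩ t).ncard = (s ∪ t).ncard := by
    rw [symmDiff_eq_sup_sdiff_inf]
    exact ncard_sdiff_add_ncard_of_subset inf_le_sup (hs.union ht)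
  have hunion := ncard_union_add_ncard_inter s t hs ht
  have hsum : s.ncard + t.ncard = (s ∆ t).ncard + 2 * (s ∩ t).ncard := by omega
  rw [← Nat.even_add, hsum]
  simp [Nat.even_add]

theorem even_ncard_symmDiff_pair {S : Set α} (hS : Even S.ncard) {a b : α} (hab : a ≠ b)
    (hfin : S.Finite := by toFinite_tac) : Even (S ∆ {a, b}).ncard := by
  simp [even_ncard_symmDiff hfin (toFinite _), hS, ncard_pair hab]

end Set

namespace SimpleGraph

variable {W : Type*}

def oddVertices (G : SimpleGraph W) : Set W := {v | Odd (G.neighborSet v).ncard}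

@[simp]
theorem oddVertices_bot : (⊥ : SimpleGraph W).oddVertices = ∅ := by
  simp [oddVertices]

theorem neighborSet_symmDiff (G H : SimpleGraph W) (v : W) :
    (G ∆ H).neighborSet v = G.neighborSet v ∆ H.neighborSet v := by
  ext w
  simp [symmDiff_def]

theorem oddVertices_symmDiff [Finite W] (G H : SimpleGraph W) :
    (G ∆ H).oddVertices = G.oddVertices ∆ H.oddVertices := by
  ext v
  simp only [oddVertices, Set.mem_ofPred_eq, Set.mem_symmDiff, neighborSet_symmDiff,
    ← Nat.not_even_iff_odd, Set.even_ncard_symmDiff (Set.toFinite _) (Set.toFinite _)]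
  tauto

theorem ncard_neighborSet_eq_ncard_incidenceSet (G : SimpleGraph W) (v : W) :
    (G.neighborSet v).ncard = (G.incidenceSet v).ncard := by
  classical
  rw [← Nat.card_coe_set_eq, ← Nat.card_coe_set_eq]
  exact Nat.card_congr (G.incidenceSetEquivNeighborSet v).symm

theorem Walk.IsTrail.oddVertices_fromEdgeSet [Finite W] {G : SimpleGraph W} {u v : W}
    {p : G.Walk u v} (hp : p.IsTrail) (huv : u ≠ v) :
    (fromEdgeSet p.edgeSet).oddVertices = {u, v} := by
  classical
  ext x
  have hinc : (fromEdgeSet p.edgeSet).incidenceSet x = ↑(p.edges.filter (x ∈ ·)).toFinset := by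
    ext e
    simpa [incidenceSet, Walk.edgeSet] using
      fun (_ : x ∈ e) he ↦ G.not_isDiag_of_mem_edgeSet (p.edges_subset_edgeSet he)
  have hparity := hp.even_countP_edges_iff x
  simp only [oddVertices, Set.mem_ofPred_eq, ncard_neighborSet_eq_ncard_incidenceSet, hinc,
    Set.ncard_coe_finset, List.toFinset_card_of_nodup (hp.edges_nodup.filter _),
    ← List.countP_eq_length_filter, ← Nat.not_even_iff_odd, hparity]
  grind

theorem oddVertices_edge [Finite W] {a b : W} (hab : a ≠ b) :
    (edge a b).oddVertices = {a, b} := by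
  have hp : (Walk.cons ((top_adj a b).2 hab) Walk.nil).IsTrail := by simp
  simpa [edge, Walk.edgeSet] using hp.oddVertices_fromEdgeSet hab

theorem Preconnected.exists_le_oddVertices_eq [Finite W] {G : SimpleGraph W}
    (hG : G.Preconnected) {S : Set W} (hS : Even S.ncard) : ∃ H ≤ G, H.oddVertices = S := by
  classical
  induction S using WellFoundedLT.induction with
  | ind S ih =>
  rcases S.eq_empty_or_nonempty with rfl | ⟨u, hu⟩
  · exact ⟨⊥, bot_le, oddVertices_bot⟩
  have hS_gt_one : 1 < S.ncard := by
    have hpos := (Set.ncard_pos S.toFinite).2 ⟨u, hu⟩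
    rcases hS with ⟨k, hk⟩
    omega
  obtain ⟨v, hv, hvu⟩ := Set.exists_ne_of_one_lt_ncard hS_gt_one u
  have huvS : ({u, v} : Set W) ⊆ S := Set.insert_subset hu (Set.singleton_subset_iff.2 hv)
  obtain ⟨p, hp⟩ := (hG u v).some.toPath
  have hlt : S ∆ {u, v} < S := by
    rw [symmDiff_of_ge huvS]
    exact sdiff_lt huvS (Set.insert_nonempty u {v}).ne_empty
  obtain ⟨H, hHG, hH⟩ := ih _ hlt (Set.even_ncard_symmDiff_pair hS hvu.symm)
  refine ⟨H ∆ fromEdgeSet p.edgeSet, symmDiff_le_sup.trans (sup_le hHG ?_), ?_⟩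
  · exact (fromEdgeSet_le G).2 (Set.sdiff_subset.trans p.edges_subset_edgeSet)
  · rw [oddVertices_symmDiff, hH, hp.isTrail.oddVertices_fromEdgeSet hvu.symm,
      symmDiff_symmDiff_cancel_right]

theorem Connected.exists_le_oddVertices_eq_isAcyclic_sdiff [Finite W] {G : SimpleGraph W}
    (hG : G.Connected) {S : Set W} (hS : Even S.ncard) :
    ∃ H ≤ G, H.oddVertices = S ∧ (G \ H).IsAcyclic := by
  induction G using WellFoundedLT.induction generalizing S with
  | ind G ih =>
  by_cases hacyc : G.IsAcyclic
  · obtain ⟨H, hHG, hH⟩ := hG.preconnected.exists_le_oddVertices_eq hS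
    exact ⟨H, hHG, hH, hacyc.anti sdiff_le⟩
  obtain ⟨a, b, hab, hbr⟩ : ∃ a b, G.Adj a b ∧ ¬ G.IsBridge s(a, b) := by
    simpa [isAcyclic_iff_forall_adj_isBridge] using hacyc
  have hedge : edge a b ≤ G := (edge_le_iff G).2 (Or.inr hab)
  have hlt : G \ edge a b < G := sdiff_lt hedge fun h ↦ by
    simpa [h] using (edge_adj a b a b).2 ⟨.inl ⟨rfl, rfl⟩, hab.ne⟩
  obtain ⟨H, hHG, hH, hacyc'⟩ := ih _ hlt (hG.connected_delete_edge_of_not_isBridge hbr)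
    (Set.even_ncard_symmDiff_pair hS hab.ne)
  have hdisj : Disjoint H (edge a b) := disjoint_sdiff_self_left.mono_left hHG
  refine ⟨H ⊔ edge a b, sup_le (hHG.trans sdiff_le) hedge, ?_, ?_⟩
  · rw [← hdisj.symmDiff_eq_sup, oddVertices_symmDiff, hH, oddVertices_edge hab.ne,
      symmDiff_symmDiff_cancel_right]
  · rwa [sup_comm, ← sdiff_sdiff_left]

end SimpleGraph

theorem exists_spanning_odd_coforest (G : SimpleGraph V) (hG : G.Connected)
    (hcard : Even (Fintype.card V)) :
    ∃ H : SimpleGraph V, H ≤ G ∧ (∀ v : V, Odd (H.neighborSet v).ncard) ∧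
      (G \ H).IsAcyclic := by
  obtain ⟨H, hHG, hH, hacyc⟩ := hG.exists_le_oddVertices_eq_isAcyclic_sdiff (S := Set.univ)
    (by rwa [Set.ncard_univ, Nat.card_eq_fintype_card])
  exact ⟨H, hHG, fun v ↦ (hH ▸ Set.mem_univ v : v ∈ H.oddVertices), hacyc⟩
end

section
/- Every unicyclic graph G (a connected graph containing exactly one cycle) satisfies χ'_o(G) ≤ 3. -/
open SimpleGraph Finset

variable {V : Type*} [Fintype V] [DecidableEq V]

/-! Since `G` has as many edges as vertices, it is not a tree, so some edge `e` lies on a cycle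
and `G - e` is a spanning tree. A tree has an odd 2-edge-colouring: root it at a vertex of degree
at most one and colour from the root outwards, giving the edges from a vertex `u` to its children
the colour of the edge from `u` to its parent when `u` has evenly many children, and the other
colour otherwise; each colour then occurs at `u` an odd number of times or not at all. Giving `e`
a third colour yields an odd 3-edge-colouring of `G`. -/

theorem Nat.eq_zero_or_odd_of_le_one {n : ℕ} (hn : n ≤ 1) : n = 0 ∨ Odd n := by
  interval_cases n <;> simp

theorem exists_forall_eq_comp_of_lt {α β : Type*} [Inhabited β] (p : α → Prop)
    [DecidablePred p] (π : α → α) (d : α → ℕ) (hd : ∀ a, p a → d (π a) < d a)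
    (F : α → β → β) : ∃ c : α → β, ∀ a, p a → c a = F a (c (π a)) := by
  refine ⟨(measure d).wf.fix fun a IH => if h : p a then F a (IH (π a) (hd a h)) else default,
    fun a ha => ?_⟩
  rw [WellFounded.fix_eq, dif_pos ha]

theorem injOn_sym2_mk_of_lt {α : Type*} {p : α → Prop} {π : α → α} {d : α → ℕ}
    (hd : ∀ a, p a → d (π a) < d a) : Set.InjOn (fun a => s(a, π a)) {a | p a} := by
  intro a ha b hb hab
  rcases Sym2.eq_iff.mp hab with ⟨hab, -⟩ | ⟨hab, hba⟩
  · exact hab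
  · have ha' := hd a ha
    have hb' := hd b hb
    rw [hba] at ha'
    rw [← hab] at hb'
    omega

theorem eq_zero_or_odd_card_filter_insert {α β : Type*} [DecidableEq α] [DecidableEq β]
    {u : α} {s : Finset α} (hu : u ∉ s) {c : α → β} {b : β} (hs : ∀ w ∈ s, c w = b)
    (hb : b = c u ↔ Even #s) (i : β) :
    #{w ∈ insert u s | c w = i} = 0 ∨ Odd #{w ∈ insert u s | c w = i} := by
  have hfilter : {w ∈ s | c w = i} = if b = i then s else ∅ := by
    split_ifs with h
    · exact filter_true_of_mem fun w hw => (hs w hw).trans h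
    · exact filter_false_of_mem fun w hw hwi => h ((hs w hw).symm.trans hwi)
  rw [filter_insert, hfilter]
  by_cases hui : c u = i <;> by_cases hbi : b = i
  · rw [if_pos hui, if_pos hbi, card_insert_of_notMem hu]
    exact Or.inr (hb.mp (hbi.trans hui.symm)).add_one
  · simp [hui, hbi]
  · rw [if_neg hui, if_pos hbi]
    exact Or.inr (Nat.not_even_iff_odd.mp fun he => hui ((hb.mpr he).symm.trans hbi))
  · simp [hui, hbi]

theorem IsOddColoring.of_deleteEdges_singleton {G : SimpleGraph V} [DecidableRel G.Adj]
    {e : Sym2 V} [DecidableRel (G.deleteEdges {e}).Adj] {k : ℕ} {g : Sym2 V → Fin k}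
    (hg : IsOddColoring (G.deleteEdges {e}) g) :
    IsOddColoring G fun e' => if e' = e then Fin.last k else (g e').castSucc := by
  intro v i
  induction i using Fin.lastCases with
  | last =>
    have hlast : ∀ e', (if e' = e then Fin.last k else (g e').castSucc) = Fin.last k ↔ e' = e :=
      fun e' => by split_ifs with h <;> simp [h, Fin.castSucc_ne_last]
    refine Nat.eq_zero_or_odd_of_le_one (card_le_one.mpr fun x hx y hy => ?_)
    rw [mem_filter, hlast] at hx hy
    exact hx.2.trans hy.2.symm
  | cast j =>
    have hcount : colorCount G (fun e' => if e' = e then Fin.last k else (g e').castSucc) v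
        j.castSucc = colorCount (G.deleteEdges {e}) g v j := by
      refine congrArg card (Finset.ext fun e' => ?_)
      by_cases he' : e' = e
      · simp [he', incidenceSet, (Fin.castSucc_lt_last j).ne']
      · simp [he', incidenceSet]
    exact hcount ▸ hg v j

theorem oddChromIndex_le {G : SimpleGraph V} [DecidableRel G.Adj] {k : ℕ} {f : Sym2 V → Fin k}
    (hf : IsOddColoring G f) : oddChromIndex G ≤ k :=
  Nat.sInf_le ⟨f, hf⟩

namespace SimpleGraph

structure IsParentMap {W : Type*} (G : SimpleGraph W) (r : W) (π : W → W) (d : W → ℕ) :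
    Prop where
  adj : ∀ v ≠ r, G.Adj v (π v)
  depth_lt : ∀ v ≠ r, d (π v) < d v
  exists_eq_edge : ∀ e ∈ G.edgeSet, ∃ v ≠ r, s(v, π v) = e

namespace IsParentMap

variable {G : SimpleGraph V} [DecidableRel G.Adj] {r : V} {π : V → V} {d : V → ℕ}

theorem incidenceFinset_eq (h : G.IsParentMap r π d) (u : V) :
    G.incidenceFinset u = image (fun v => s(v, π v)) {v | v ≠ r ∧ (v = u ∨ π v = u)} := by
  ext e
  simp only [incidenceFinset_eq_filter, mem_filter, mem_edgeFinset, mem_image, mem_univ, true_and]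
  constructor
  · rintro ⟨he, hue⟩
    obtain ⟨v, hv, rfl⟩ := h.exists_eq_edge e he
    exact ⟨v, ⟨hv, by simpa [eq_comm] using hue⟩, rfl⟩
  · rintro ⟨v, ⟨hv, hvu⟩, rfl⟩
    exact ⟨h.adj v hv, by rcases hvu with rfl | rfl <;> simp⟩

theorem degree_eq (h : G.IsParentMap r π d) (u : V) :
    G.degree u = #{v | v ≠ r ∧ (v = u ∨ π v = u)} := by
  rw [← card_incidenceFinset_eq_degree, h.incidenceFinset_eq, card_image_of_injOn]
  exact (injOn_sym2_mk_of_lt h.depth_lt).mono fun v hv => (mem_filter.mp hv).2.1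

theorem colorCount_eq (h : G.IsParentMap r π d) {k : ℕ} {g : Sym2 V → Fin k} {c : V → Fin k}
    (hg : ∀ v ≠ r, g s(v, π v) = c v) (u : V) (i : Fin k) :
    colorCount G g u i = #{v | (v ≠ r ∧ (v = u ∨ π v = u)) ∧ c v = i} := by
  rw [colorCount, h.incidenceFinset_eq, filter_image, card_image_of_injOn, filter_filter]
  · refine congrArg card (filter_congr fun v _ => and_congr_right fun hv => ?_)
    rw [hg v hv.1]
  · exact (injOn_sym2_mk_of_lt h.depth_lt).mono fun v hv =>
      (mem_filter.mp (mem_filter.mp hv).1).2.1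

theorem exists_isOddColoring_fin_two (h : G.IsParentMap r π d) (hr : G.degree r ≤ 1) :
    ∃ g : Sym2 V → Fin 2, IsOddColoring G g := by
  set children : V → Finset V := fun u => {w | w ≠ r ∧ π w = u}
  obtain ⟨c, hc⟩ := exists_forall_eq_comp_of_lt (β := Fin 2) (· ≠ r) π d h.depth_lt
    fun w x => if Even #(children (π w)) then x else x + 1
  have hinj : Function.Injective fun v : {v // v ≠ r} => s(v.1, π v.1) :=
    fun v w hvw => Subtype.ext (injOn_sym2_mk_of_lt h.depth_lt v.2 w.2 hvw)
  set g := Function.extend (fun v : {v // v ≠ r} => s(v.1, π v.1)) (c ∘ Subtype.val) 0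
  have hg : ∀ v ≠ r, g s(v, π v) = c v := fun v hv => hinj.extend_apply _ _ ⟨v, hv⟩
  refine ⟨g, fun u i => ?_⟩
  rw [h.colorCount_eq hg]
  by_cases hu : u = r
  · subst hu
    refine Nat.eq_zero_or_odd_of_le_one (le_trans (card_le_card fun v => ?_) (h.degree_eq u ▸ hr))
    simp only [mem_filter, mem_univ, true_and]
    exact And.left
  have hsplit : ({v | (v ≠ r ∧ (v = u ∨ π v = u)) ∧ c v = i} : Finset V) =
      {v ∈ insert u (children u) | c v = i} := by
    ext v
    simp only [children, mem_filter, mem_insert, mem_univ, true_and]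
    constructor
    · rintro ⟨⟨hv, rfl | hvu⟩, hvi⟩ <;> tauto
    · rintro ⟨rfl | hv, hvi⟩ <;> tauto
  rw [hsplit]
  refine eq_zero_or_odd_card_filter_insert (fun hu' => (h.adj u hu).ne ?_)
    (b := if Even #(children u) then c u else c u + 1) (fun w hw => ?_) ?_ i
  · exact ((mem_filter.mp hu').2.2).symm
  · obtain ⟨hwr, rfl⟩ := (mem_filter.mp hw).2
    exact hc w hwr
  · split_ifs with he <;> simp [he]

end IsParentMap

theorem Connected.exists_adj_dist_lt {W : Type*} {G : SimpleGraph W} (hG : G.Connected)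
    {v r : W} (hv : v ≠ r) : ∃ w, G.Adj v w ∧ G.dist w r < G.dist v r := by
  obtain ⟨p, hp⟩ := (hG.preconnected v r).exists_walk_length_eq_dist
  cases p with
  | nil => exact absurd rfl hv
  | cons hadj q =>
    refine ⟨_, hadj, (dist_le q).trans_lt ?_⟩
    rw [← hp, Walk.length_cons]
    omega

theorem IsTree.exists_isParentMap {G : SimpleGraph V} [DecidableRel G.Adj] (hG : G.IsTree)
    (r : V) : ∃ π : V → V, G.IsParentMap r π (G.dist · r) := by
  choose! π hadj hlt using fun v (hv : v ≠ r) => hG.connected.exists_adj_dist_lt hv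
  refine ⟨π, hadj, hlt, fun e he => ?_⟩
  -- both sides have `card V - 1` elements
  have himage : image (fun v => s(v, π v)) (univ.erase r) = G.edgeFinset := by
    refine eq_of_subset_of_card_le (fun e he => ?_) ?_
    · obtain ⟨v, hv, rfl⟩ := mem_image.mp he
      exact mem_edgeFinset.mpr (hadj v (ne_of_mem_erase hv))
    · have hinj := injOn_sym2_mk_of_lt (d := (G.dist · r)) hlt
      rw [card_image_of_injOn (hinj.mono fun v hv => ne_of_mem_erase hv),
        card_erase_of_mem (mem_univ r), card_univ, ← hG.card_edgeFinset, Nat.add_sub_cancel]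
  obtain ⟨v, hv, rfl⟩ := mem_image.mp (himage ▸ mem_edgeFinset.mpr he)
  exact ⟨v, ne_of_mem_erase hv, rfl⟩

theorem IsTree.exists_degree_le_one {W : Type*} [Fintype W] {G : SimpleGraph W}
    [DecidableRel G.Adj] (hG : G.IsTree) : ∃ r, G.degree r ≤ 1 := by
  cases subsingleton_or_nontrivial W with
  | inl _ =>
    obtain ⟨r⟩ := hG.connected.nonempty
    refine ⟨r, ?_⟩
    rw [← card_neighborFinset_eq_degree, card_le_one]
    simp
  | inr _ =>
    obtain ⟨r, hr⟩ := hG.exists_vert_degree_one_of_nontrivial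
    exact ⟨r, hr.le⟩

theorem IsTree.exists_isOddColoring_fin_two {G : SimpleGraph V} [DecidableRel G.Adj]
    (hG : G.IsTree) : ∃ g : Sym2 V → Fin 2, IsOddColoring G g := by
  obtain ⟨r, hr⟩ := hG.exists_degree_le_one
  obtain ⟨π, hπ⟩ := hG.exists_isParentMap r
  exact hπ.exists_isOddColoring_fin_two hr

end SimpleGraph

theorem unicyclic_oddChromIndex_le_three (G : SimpleGraph V) [DecidableRel G.Adj]
    (hG : G.Connected) (hUni : G.edgeFinset.card = Fintype.card V) :
    oddChromIndex G ≤ 3 := by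
  have hcyclic : ¬ G.IsAcyclic := fun hacyclic => by
    have := IsTree.card_edgeFinset ⟨hG, hacyclic⟩
    omega
  obtain ⟨x, y, hxy, hbridge⟩ : ∃ x y, G.Adj x y ∧ ¬ G.IsBridge s(x, y) := by
    simpa [isAcyclic_iff_forall_adj_isBridge] using hcyclic
  have htree : (G.deleteEdges {s(x, y)}).IsTree := by
    rw [isTree_iff_connected_and_card]
    refine ⟨hG.connected_delete_edge_of_not_isBridge hbridge, ?_⟩
    have hedges : (G.deleteEdges {s(x, y)}).edgeFinset = G.edgeFinset.erase s(x, y) := by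
      ext e
      simp [and_comm]
    rw [Nat.card_eq_fintype_card, ← edgeFinset_card, Nat.card_eq_fintype_card, hedges,
      card_erase_of_mem (mem_edgeFinset.mpr hxy), hUni,
      Nat.sub_add_cancel (Fintype.card_pos_iff.mpr ⟨x⟩)]
  obtain ⟨g, hg⟩ := htree.exists_isOddColoring_fin_two
  exact oddChromIndex_le hg.of_deleteEdges_singleton
end

section
/- If G is a Shannon triangle of type (p, q, r), then χ'_o(G) = p + q + r. -/
open Finset

/-- Incidence in the Shannon triangle with bouquets of sizes `a` (between vertices
`0,1`), `b` (between `1,2`) and `c` (between `2,0`). -/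
def shInc (a b c : ℕ) (v : Fin 3) (e : Fin a ⊕ Fin b ⊕ Fin c) : Bool :=
  match e with
  | .inl _ => decide (v = 0) || decide (v = 1)
  | .inr (.inl _) => decide (v = 1) || decide (v = 2)
  | .inr (.inr _) => decide (v = 2) || decide (v = 0)

/-- Number of edges incident to `v` colored `i`. -/
def shCount (a b c : ℕ) {k : ℕ} (f : Fin a ⊕ Fin b ⊕ Fin c → Fin k)
    (v : Fin 3) (i : Fin k) : ℕ :=
  (Finset.univ.filter (fun e => shInc a b c v e = true ∧ f e = i)).card

/-- Count of `a`-bouquet edges colored `i`. -/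
def cA {a b c k : ℕ} (f : Fin a ⊕ Fin b ⊕ Fin c → Fin k) (i : Fin k) : ℕ :=
  (univ.filter fun x : Fin a => f (.inl x) = i).card

/-- Count of `b`-bouquet edges colored `i`. -/
def cB {a b c k : ℕ} (f : Fin a ⊕ Fin b ⊕ Fin c → Fin k) (i : Fin k) : ℕ :=
  (univ.filter fun y : Fin b => f (.inr (.inl y)) = i).card

/-- Count of `c`-bouquet edges colored `i`. -/
def cC {a b c k : ℕ} (f : Fin a ⊕ Fin b ⊕ Fin c → Fin k) (i : Fin k) : ℕ :=
  (univ.filter fun z : Fin c => f (.inr (.inr z)) = i).card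

lemma shCount_zero {a b c k : ℕ} (f : Fin a ⊕ Fin b ⊕ Fin c → Fin k) (i : Fin k) :
    shCount a b c f 0 i = cA f i + cC f i := by
  unfold shCount cA cC
  rw [Finset.card_filter, Fintype.sum_sum_type, Fintype.sum_sum_type,
      Finset.card_filter, Finset.card_filter]
  have h1 : ∀ x : Fin a, shInc a b c 0 (.inl x) = true := fun _ => rfl
  have h2 : ∀ y : Fin b, shInc a b c 0 (.inr (.inl y)) = false := fun _ => rfl
  have h3 : ∀ z : Fin c, shInc a b c 0 (.inr (.inr z)) = true := fun _ => rfl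
  simp [h1, h2, h3]

lemma shCount_one {a b c k : ℕ} (f : Fin a ⊕ Fin b ⊕ Fin c → Fin k) (i : Fin k) :
    shCount a b c f 1 i = cA f i + cB f i := by
  unfold shCount cA cB
  rw [Finset.card_filter, Fintype.sum_sum_type, Fintype.sum_sum_type,
      Finset.card_filter, Finset.card_filter]
  have h1 : ∀ x : Fin a, shInc a b c 1 (.inl x) = true := fun _ => rfl
  have h2 : ∀ y : Fin b, shInc a b c 1 (.inr (.inl y)) = true := fun _ => rfl
  have h3 : ∀ z : Fin c, shInc a b c 1 (.inr (.inr z)) = false := fun _ => rfl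
  simp [h1, h2, h3]

lemma shCount_two {a b c k : ℕ} (f : Fin a ⊕ Fin b ⊕ Fin c → Fin k) (i : Fin k) :
    shCount a b c f 2 i = cB f i + cC f i := by
  unfold shCount cB cC
  rw [Finset.card_filter, Fintype.sum_sum_type, Fintype.sum_sum_type,
      Finset.card_filter, Finset.card_filter]
  have h1 : ∀ x : Fin a, shInc a b c 2 (.inl x) = false := fun _ => rfl
  have h2 : ∀ y : Fin b, shInc a b c 2 (.inr (.inl y)) = true := fun _ => rfl
  have h3 : ∀ z : Fin c, shInc a b c 2 (.inr (.inr z)) = true := fun _ => rfl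
  simp [h1, h2, h3]

set_option linter.unnecessarySeqFocus false in
lemma col_count (n t o m : ℕ) (hn : 1 ≤ n) :
    (univ.filter fun x : Fin n => o + (if (x:ℕ) = 0 then 0 else t) = m).card
    = if m = o then (if t = 0 then n else 1) else (if m = o + t then n - 1 else 0) := by
  have hone : (univ.filter fun x : Fin n => (x:ℕ) = 0).card = 1 := by
    rw [show (univ.filter fun x : Fin n => (x:ℕ) = 0) = {(⟨0, hn⟩ : Fin n)} from by
      ext x; simp [Fin.ext_iff]]
    simp
  rcases eq_or_ne t 0 with rfl | ht
  · by_cases hmo : m = o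
    · subst hmo
      rw [if_pos rfl, if_pos rfl]
      rw [show (univ.filter fun x : Fin n => m + (if (x:ℕ) = 0 then 0 else 0) = m)
          = (univ : Finset (Fin n)) from by
        ext x; rcases eq_or_ne (x:ℕ) 0 with h | h <;> simp [h]]
      simp
    · rw [if_neg hmo, if_neg (by omega)]
      rw [show (univ.filter fun x : Fin n => o + (if (x:ℕ) = 0 then 0 else 0) = m)
          = (∅ : Finset (Fin n)) from by
        ext x
        rcases eq_or_ne (x:ℕ) 0 with h | h <;>
          simp [h, if_neg (show ¬ o = m from fun hh => hmo hh.symm)]]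
      simp
  · rcases eq_or_ne m o with rfl | hm
    · rw [if_pos rfl, if_neg ht, ← hone]
      congr 1; ext x
      rcases eq_or_ne (x:ℕ) 0 with h | h <;> simp [h] <;> omega
    · rcases eq_or_ne m (o + t) with rfl | hmt
      · rw [if_neg hm, if_pos rfl]
        have hsplit := Finset.card_filter_add_card_filter_not
          (s := (univ : Finset (Fin n))) (p := fun x : Fin n => (x:ℕ) = 0)
        rw [show (univ.filter fun x : Fin n => o + (if (x:ℕ) = 0 then 0 else t) = o + t)
            = univ.filter fun x : Fin n => ¬ ((x:ℕ) = 0) from by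
          ext x
          rcases eq_or_ne (x:ℕ) 0 with h | h <;> simp [h] <;> omega]
        simp only [Finset.card_univ, Fintype.card_fin] at hsplit
        omega
      · rw [if_neg hm, if_neg hmt]
        rw [show (univ.filter fun x : Fin n => o + (if (x:ℕ) = 0 then 0 else t) = m) = ∅ from by
          ext x
          rcases eq_or_ne (x:ℕ) 0 with h | h <;> simp [h] <;> omega]
        simp

lemma exists_coloring (a b c tA tB tC : ℕ) (ha : 1 ≤ a) (hb : 1 ≤ b) (hc : 1 ≤ c)
    (hA1 : 1 ≤ tA) (hA2 : tA ≤ 2) (hA3 : a % 2 = tA % 2)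
    (hB1 : 1 ≤ tB) (hB2 : tB ≤ 2) (hB3 : b % 2 = tB % 2)
    (hC1 : 1 ≤ tC) (hC2 : tC ≤ 2) (hC3 : c % 2 = tC % 2) :
    ∃ f : Fin a ⊕ Fin b ⊕ Fin c → Fin (tA + tB + tC),
      ∀ (v : Fin 3) (i : Fin (tA + tB + tC)),
        shCount a b c f v i = 0 ∨ Odd (shCount a b c f v i) := by
  set f : Fin a ⊕ Fin b ⊕ Fin c → Fin (tA + tB + tC) := fun e =>
    match e with
    | .inl x => ⟨0 + (if (x:ℕ) = 0 then 0 else tA - 1), by split_ifs <;> omega⟩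
    | .inr (.inl y) => ⟨tA + (if (y:ℕ) = 0 then 0 else tB - 1), by split_ifs <;> omega⟩
    | .inr (.inr z) => ⟨tA + tB + (if (z:ℕ) = 0 then 0 else tC - 1), by split_ifs <;> omega⟩
    with hfdef
  have hcA : ∀ i : Fin (tA + tB + tC), cA f i =
      if (i:ℕ) = 0 then (if tA - 1 = 0 then a else 1)
      else (if (i:ℕ) = 0 + (tA - 1) then a - 1 else 0) := by
    intro i
    rw [← col_count a (tA - 1) 0 (i:ℕ) ha]
    unfold cA
    congr 1; ext x
    simp [hfdef, Fin.ext_iff]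
  have hcB : ∀ i : Fin (tA + tB + tC), cB f i =
      if (i:ℕ) = tA then (if tB - 1 = 0 then b else 1)
      else (if (i:ℕ) = tA + (tB - 1) then b - 1 else 0) := by
    intro i
    rw [← col_count b (tB - 1) tA (i:ℕ) hb]
    unfold cB
    congr 1; ext y
    simp [hfdef, Fin.ext_iff]
  have hcC : ∀ i : Fin (tA + tB + tC), cC f i =
      if (i:ℕ) = tA + tB then (if tC - 1 = 0 then c else 1)
      else (if (i:ℕ) = tA + tB + (tC - 1) then c - 1 else 0) := by
    intro i
    rw [← col_count c (tC - 1) (tA + tB) (i:ℕ) hc]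
    unfold cC
    congr 1; ext z
    simp [hfdef, Fin.ext_iff]
  refine ⟨f, fun v i => ?_⟩
  have him := i.isLt
  have hv : v = 0 ∨ v = 1 ∨ v = 2 := by fin_cases v <;> simp
  rcases hv with rfl | rfl | rfl
  · rw [shCount_zero, hcA, hcC, Nat.odd_iff]
    split_ifs <;> omega
  · rw [shCount_one, hcA, hcB, Nat.odd_iff]
    split_ifs <;> omega
  · rw [shCount_two, hcB, hcC, Nat.odd_iff]
    split_ifs <;> omega

lemma bouquet_bound {k n : ℕ} (g : Fin k → ℕ) (hodd : ∀ i, g i ≠ 0 → g i % 2 = 1)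
    (hsum : ∑ i, g i = n) (hn : 1 ≤ n) :
    (if Even n then 2 else 1) ≤ (univ.filter fun i => g i ≠ 0).card := by
  set T := univ.filter fun i => g i ≠ 0 with hT
  have hsT : ∑ i ∈ T, g i = n := by rw [← hsum, hT]; exact Finset.sum_filter_ne_zero _
  have hne : T.Nonempty := by
    by_contra hemp
    rw [Finset.not_nonempty_iff_eq_empty] at hemp
    rw [hemp, Finset.sum_empty] at hsT; omega
  by_cases hpar : Even n
  · rw [if_pos hpar]
    by_contra hlt
    push_neg at hlt
    obtain ⟨j, hj⟩ := hne
    have hTj : T = {j} :=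
      Finset.eq_singleton_iff_unique_mem.mpr
        ⟨hj, fun b hb => Finset.card_le_one.mp (by omega) b hb j hj⟩
    rw [hTj, Finset.sum_singleton] at hsT
    have hjodd := hodd j (Finset.mem_filter.mp hj).2
    rw [Nat.even_iff] at hpar
    omega
  · rw [if_neg hpar]
    exact hne.card_pos

theorem shannon_triangle_oddChromIndex (a b c : ℕ) (ha : 1 ≤ a) (hb : 1 ≤ b) (hc : 1 ≤ c) :
    IsLeast {k : ℕ | ∃ f : Fin a ⊕ Fin b ⊕ Fin c → Fin k,
        ∀ (v : Fin 3) (i : Fin k), shCount a b c f v i = 0 ∨ Odd (shCount a b c f v i)}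
      ((if Even a then 2 else 1) + (if Even b then 2 else 1) + (if Even c then 2 else 1)) := by
  have haux : ∀ n : ℕ, 1 ≤ n →
      1 ≤ (if Even n then 2 else 1) ∧ (if Even n then 2 else 1) ≤ 2 ∧
        n % 2 = (if Even n then 2 else 1) % 2 := by
    intro n hn
    by_cases hpar : Even n
    · rw [if_pos hpar]
      rw [Nat.even_iff] at hpar
      omega
    · rw [if_neg hpar]
      rcases Nat.even_or_odd n with h | h
      · exact absurd h hpar
      · rw [Nat.odd_iff] at h
        omega
  constructor
  · exact exists_coloring a b c _ _ _ ha hb hc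
      (haux a ha).1 (haux a ha).2.1 (haux a ha).2.2
      (haux b hb).1 (haux b hb).2.1 (haux b hb).2.2
      (haux c hc).1 (haux c hc).2.1 (haux c hc).2.2
  · rintro k ⟨f, hf⟩
    have key : ∀ i : Fin k,
        (cA f i ≠ 0 → cA f i % 2 = 1 ∧ cB f i = 0 ∧ cC f i = 0) ∧
        (cB f i ≠ 0 → cB f i % 2 = 1 ∧ cA f i = 0 ∧ cC f i = 0) ∧
        (cC f i ≠ 0 → cC f i % 2 = 1 ∧ cA f i = 0 ∧ cB f i = 0) := by
      intro i
      have h0 := hf 0 i; have h1 := hf 1 i; have h2 := hf 2 i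
      rw [shCount_zero, Nat.odd_iff] at h0
      rw [shCount_one, Nat.odd_iff] at h1
      rw [shCount_two, Nat.odd_iff] at h2
      omega
    have hsA : ∑ i : Fin k, cA f i = a := by
      have := Finset.card_eq_sum_card_fiberwise
        (s := (univ : Finset (Fin a))) (t := (univ : Finset (Fin k)))
        (f := fun x => f (.inl x)) (fun x _ => mem_univ _)
      simp only [Finset.card_univ, Fintype.card_fin] at this
      exact this.symm
    have hsB : ∑ i : Fin k, cB f i = b := by
      have := Finset.card_eq_sum_card_fiberwise
        (s := (univ : Finset (Fin b))) (t := (univ : Finset (Fin k)))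
        (f := fun y => f (.inr (.inl y))) (fun y _ => mem_univ _)
      simp only [Finset.card_univ, Fintype.card_fin] at this
      exact this.symm
    have hsC : ∑ i : Fin k, cC f i = c := by
      have := Finset.card_eq_sum_card_fiberwise
        (s := (univ : Finset (Fin c))) (t := (univ : Finset (Fin k)))
        (f := fun z => f (.inr (.inr z))) (fun z _ => mem_univ _)
      simp only [Finset.card_univ, Fintype.card_fin] at this
      exact this.symm
    have hA : (if Even a then 2 else 1) ≤ (univ.filter fun i : Fin k => cA f i ≠ 0).card :=
      bouquet_bound _ (fun i hi => ((key i).1 hi).1) hsA ha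
    have hB : (if Even b then 2 else 1) ≤ (univ.filter fun i : Fin k => cB f i ≠ 0).card :=
      bouquet_bound _ (fun i hi => ((key i).2.1 hi).1) hsB hb
    have hC : (if Even c then 2 else 1) ≤ (univ.filter fun i : Fin k => cC f i ≠ 0).card :=
      bouquet_bound _ (fun i hi => ((key i).2.2 hi).1) hsC hc
    set TA := univ.filter fun i : Fin k => cA f i ≠ 0 with hTA
    set TB := univ.filter fun i : Fin k => cB f i ≠ 0 with hTB
    set TC := univ.filter fun i : Fin k => cC f i ≠ 0 with hTC
    have dAB : Disjoint TA TB := by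
      rw [Finset.disjoint_left]
      intro i hiA hiB
      exact (Finset.mem_filter.mp hiB).2 ((key i).1 (Finset.mem_filter.mp hiA).2).2.1
    have dAC : Disjoint TA TC := by
      rw [Finset.disjoint_left]
      intro i hiA hiC
      exact (Finset.mem_filter.mp hiC).2 ((key i).1 (Finset.mem_filter.mp hiA).2).2.2
    have dBC : Disjoint TB TC := by
      rw [Finset.disjoint_left]
      intro i hiB hiC
      exact (Finset.mem_filter.mp hiC).2 ((key i).2.1 (Finset.mem_filter.mp hiB).2).2.2
    have hunion : ((TA ∪ TB) ∪ TC).card = TA.card + TB.card + TC.card := by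
      rw [Finset.card_union_of_disjoint (by rw [Finset.disjoint_union_left]; exact ⟨dAC, dBC⟩),
          Finset.card_union_of_disjoint dAB]
    have hk : ((TA ∪ TB) ∪ TC).card ≤ k := by
      calc ((TA ∪ TB) ∪ TC).card ≤ (univ : Finset (Fin k)).card :=
            Finset.card_le_card (Finset.subset_univ _)
        _ = k := by simp
    omega
end

section
/- Every simple graph G is odd 4-edge-colorable, i.e., E(G) can be partitioned into at most 4 sets each inducing a subgraph whose non-isolated vertices all have odd degree. -/
open SimpleGraph Finset

variable {V : Type*} [Fintype V] [DecidableEq V]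

/-!
Work in one connected component, on a vertex set `A`, and let `T` be the set of vertices of even
degree. If `|A|` is even then so is `|T|`, and a minimal `T`-join `J` is a forest. The edges
outside `J` form an odd subgraph, and a forest is odd 2-edge-colourable (the pendant edges at the
second vertex of a longest path are coloured last), so three colours suffice.

If `|A|` is odd, remove a vertex `z` such that `A - z` stays connected and give the edges at `z`
the fourth colour. This works at once if `z` has odd degree. Otherwise one edge `zw` is held back
and given a colour missing at `w` in the colouring of `A - z`; such a colour exists if `w` has
even degree in `A - z`, and also if `A - z - w` is connected, since then the `T`-join can avoid
`w`. A suitable `z` is a leaf, or, if there are no leaves, the first vertex of a longest path,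
with `w` the second.
-/

open scoped symmDiff

namespace SimpleGraph

section Restrict

variable {V : Type*} (G : SimpleGraph V)

def restrict (A : Finset V) : SimpleGraph V where
  Adj x y := G.Adj x y ∧ x ∈ A ∧ y ∈ A
  symm := ⟨fun _ _ h => ⟨h.1.symm, h.2.2, h.2.1⟩⟩
  loopless := ⟨fun x h => G.loopless.irrefl x h.1⟩

instance [DecidableEq V] [DecidableRel G.Adj] (A : Finset V) : DecidableRel (G.restrict A).Adj :=
  fun x y => inferInstanceAs (Decidable (G.Adj x y ∧ x ∈ A ∧ y ∈ A))

def ConnectedOn (A : Finset V) : Prop :=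
  ∀ x ∈ A, ∀ y ∈ A, (G.restrict A).Reachable x y

variable {G} {A B : Finset V} {x y : V}

@[simp] lemma restrict_adj : (G.restrict A).Adj x y ↔ G.Adj x y ∧ x ∈ A ∧ y ∈ A := Iff.rfl

lemma restrict_le : G.restrict A ≤ G := fun _ _ h => h.1

lemma restrict_mono (h : A ⊆ B) : G.restrict A ≤ G.restrict B :=
  fun _ _ hxy => ⟨hxy.1, h hxy.2.1, h hxy.2.2⟩

lemma mem_of_mem_edgeSet_restrict {e : Sym2 V} (he : e ∈ (G.restrict A).edgeSet) (hx : x ∈ e) :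
    x ∈ A := by
  induction e with
  | h a b => rcases Sym2.mem_iff.1 hx with rfl | rfl <;> simp_all

lemma mem_of_reachable_restrict (h : (G.restrict A).Reachable x y) (hx : x ∈ A) : y ∈ A := by
  obtain ⟨p⟩ := h
  induction p with
  | nil => exact hx
  | cons h _ ih => exact ih h.2.2

lemma reachable_restrict_of_support_subset {K : SimpleGraph V} (hK : K ≤ G) (p : K.Walk x y)
    (hp : ∀ v ∈ p.support, v ∈ B) : (G.restrict B).Reachable x y := by
  induction p with
  | nil => rfl
  | cons h p ih =>
    refine (Adj.reachable (G := G.restrict B) ⟨hK h, hp _ (by simp), hp _ (by simp)⟩).trans ?_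
    exact ih fun v hv => hp v (by simp [hv])

lemma reachable_restrict_of_mem_support {K : SimpleGraph V} (hK : K ≤ G) (p : K.Walk x y)
    (hp : ∀ v ∈ p.support, v ∈ B) {w : V} (hw : w ∈ p.support) :
    (G.restrict B).Reachable x w := by
  classical
  exact reachable_restrict_of_support_subset hK (p.takeUntil w hw)
    fun v hv => hp v (p.support_takeUntil_subset_support hw hv)

lemma mem_of_mem_support_restrict (p : (G.restrict A).Walk x y) (hx : x ∈ A) {w : V}
    (hw : w ∈ p.support) : w ∈ A := by
  induction p with
  | nil => simp_all
  | cons h p ih =>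
    rcases List.mem_cons.1 hw with rfl | hw
    · exact hx
    · exact ih h.2.2 hw

theorem ConnectedOn.of_boundary (hA : G.ConnectedOn A) (hBA : B ⊆ A) {r : V} (hr : r ∈ B)
    (hbd : ∀ y ∈ B, ∀ u ∈ A, u ∉ B → G.Adj y u → (G.restrict B).Reachable r y) :
    G.ConnectedOn B := by
  suffices h : ∀ t ∈ B, (G.restrict B).Reachable t r from
    fun x hx y hy => (h x hx).trans (h y hy).symm
  intro t ht
  by_contra htr
  obtain ⟨p⟩ := hA t (hBA ht) r (hBA hr)
  obtain ⟨⟨⟨y, u⟩, hyu⟩, -, hy, hu⟩ :=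
    p.exists_boundary_dart {s | (G.restrict B).Reachable t s} Reachable.rfl htr
  simp only [Set.mem_ofPred_eq] at hy hu
  have hyB : y ∈ B := mem_of_reachable_restrict hy ht
  by_cases huB : u ∈ B
  · exact hu (hy.trans (Adj.reachable ⟨hyu.1, hyB, huB⟩))
  · exact htr (hy.trans (hbd y hyB u hyu.2.2 huB hyu.1).symm)

end Restrict

section LongestPath

variable {V : Type*} {G : SimpleGraph V}

def Walk.IsLongestPath {u v : V} (p : G.Walk u v) : Prop :=
  p.IsPath ∧ ∀ (u' v' : V) (q : G.Walk u' v'), q.IsPath → q.length ≤ p.length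

lemma exists_isLongestPath [Finite G.edgeSet] {a b : V} (hab : G.Adj a b) :
    ∃ (u v : V) (p : G.Walk u v), p.IsLongestPath ∧ ¬ p.Nil := by
  have : Nonempty V := ⟨a⟩
  obtain ⟨u, v, p, hp, hmax⟩ := Walk.exists_isPath_forall_isPath_length_le_length G
  refine ⟨u, v, p, ⟨hp, hmax⟩, fun hnil => ?_⟩
  have := hmax _ _ _ (Walk.IsPath.nil.cons (by simpa using hab.ne) (h := hab))
  simp [Walk.length_eq_zero_iff.2 hnil] at this

variable {u v w : V} {p : G.Walk u v}

lemma Walk.IsLongestPath.of_length_le {q : G.Walk w v} (hp : p.IsLongestPath) (hq : q.IsPath)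
    (hlen : p.length ≤ q.length) : q.IsLongestPath :=
  ⟨hq, fun _ _ r hr => (hp.2 _ _ r hr).trans hlen⟩

lemma Walk.IsLongestPath.mem_support_of_adj (hp : p.IsLongestPath) (h : G.Adj u w) :
    w ∈ p.support := by
  by_contra hw
  have := hp.2 _ _ _ (hp.1.cons hw (h := h.symm))
  simp at this

end LongestPath

section Removable

variable {V : Type*} [DecidableEq V] {G : SimpleGraph V} {A : Finset V}

lemma ConnectedOn.erase_of_existsUnique_adj (hA : G.ConnectedOn A) {y : V} (hy : y ∈ A)
    (hleaf : ∃! u, (G.restrict A).Adj y u) : G.ConnectedOn (A.erase y) := by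
  obtain ⟨u, hyu, huniq⟩ := hleaf
  refine hA.of_boundary (erase_subset _ _) (mem_erase.2 ⟨hyu.ne.symm, hyu.2.2⟩) ?_
  intro y' hy' v hv hvy hadj
  obtain rfl : v = y := by simpa [hv] using hvy
  obtain rfl : y' = u := huniq y' ⟨hadj.symm, hv, (mem_erase.1 hy').2⟩
  rfl

lemma ConnectedOn.erase_of_isLongestPath (hA : G.ConnectedOn A) {x₀ x₁ v : V}
    {h : (G.restrict A).Adj x₀ x₁} {q : (G.restrict A).Walk x₁ v}
    (hp : (Walk.cons h q).IsLongestPath) : G.ConnectedOn (A.erase x₀) := by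
  have hx₀q : x₀ ∉ q.support := ((Walk.cons_isPath_iff _ _).1 hp.1).2
  refine hA.of_boundary (erase_subset _ _) (mem_erase.2 ⟨h.ne.symm, h.2.2⟩) ?_
  intro y hy u hu hux₀ hyu
  obtain rfl : u = x₀ := by simpa [hu] using hux₀
  have hyq : y ∈ q.support := by
    simpa [(mem_erase.1 hy).1] using hp.mem_support_of_adj ⟨hyu.symm, hu, (mem_erase.1 hy).2⟩
  exact reachable_restrict_of_mem_support restrict_le _ (fun w hw =>
    mem_erase.2 ⟨ne_of_mem_of_not_mem hw hx₀q, mem_of_mem_support_restrict _ h.2.2 hw⟩) hyq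

lemma ConnectedOn.erase_erase_of_isLongestPath (hA : G.ConnectedOn A)
    (hbranch : ∀ y u, (G.restrict A).Adj y u → ∃ u', (G.restrict A).Adj y u' ∧ u' ≠ u)
    {x₀ x₁ x₂ v : V} {h₀₁ : (G.restrict A).Adj x₀ x₁} {h₁₂ : (G.restrict A).Adj x₁ x₂}
    {r : (G.restrict A).Walk x₂ v} (hp : (Walk.cons h₀₁ (Walk.cons h₁₂ r)).IsLongestPath) :
    G.ConnectedOn ((A.erase x₀).erase x₁) := by
  obtain ⟨hq, hx₀q⟩ := (Walk.cons_isPath_iff _ _).1 hp.1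
  obtain ⟨-, hx₁r⟩ := (Walk.cons_isPath_iff _ _).1 hq
  have hx₀r : x₀ ∉ r.support := fun h => hx₀q (by simp [h])
  have hx₂B : x₂ ∈ (A.erase x₀).erase x₁ :=
    mem_erase.2 ⟨h₁₂.ne.symm, mem_erase.2 ⟨ne_of_mem_of_not_mem (by simp) hx₀q, h₁₂.2.2⟩⟩
  have hr : ∀ w ∈ r.support, (G.restrict ((A.erase x₀).erase x₁)).Reachable x₂ w :=
    fun w => reachable_restrict_of_mem_support restrict_le r fun w hw =>
      mem_erase.2 ⟨ne_of_mem_of_not_mem hw hx₁r, mem_erase.2 ⟨ne_of_mem_of_not_mem hw hx₀r,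
        mem_of_mem_support_restrict r h₁₂.2.2 hw⟩⟩
  refine hA.of_boundary ((erase_subset _ _).trans (erase_subset _ _)) hx₂B ?_
  intro y hy u hu huB hyu
  simp only [mem_erase, ne_eq] at hy huB
  obtain ⟨hyx₁, hyx₀, hyA⟩ := hy
  obtain rfl | rfl : u = x₀ ∨ u = x₁ := by tauto
  · exact hr y (by simpa [hyx₀, hyx₁] using hp.mem_support_of_adj ⟨hyu.symm, hu, hyA⟩)
  by_cases hyr : y ∈ r.support
  · exact hr y hyr
  -- `y` starts a longest path, so its second neighbour lies on `r`
  have hyu' : (G.restrict A).Adj y u := ⟨hyu, hyA, hu⟩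
  have hp' : (Walk.cons hyu' (Walk.cons h₁₂ r)).IsLongestPath :=
    hp.of_length_le (hq.cons (by simp [hyx₁, hyr])) (by simp)
  obtain ⟨u', hyu'', hu'u⟩ := hbranch y u hyu'
  have hu'r : u' ∈ r.support := by
    simpa [hu'u, hyu''.ne.symm] using hp'.mem_support_of_adj hyu''
  exact (hr u' hu'r).trans (Adj.reachable ⟨hyu''.1.symm,
    mem_of_reachable_restrict (hr u' hu'r) hx₂B, mem_erase.2 ⟨hyx₁, mem_erase.2 ⟨hyx₀, hyA⟩⟩⟩)

theorem ConnectedOn.exists_removable [Finite V] (hA : G.ConnectedOn A) {a b : V}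
    (hab : (G.restrict A).Adj a b) :
    ∃ z ∈ A, G.ConnectedOn (A.erase z) ∧ ((∃! u, (G.restrict A).Adj z u) ∨
      ∃ w, (G.restrict A).Adj z w ∧ G.ConnectedOn ((A.erase z).erase w)) := by
  by_cases hleaf : ∃ y ∈ A, ∃! u, (G.restrict A).Adj y u
  · obtain ⟨y, hy, hleaf⟩ := hleaf
    exact ⟨y, hy, hA.erase_of_existsUnique_adj hy hleaf, Or.inl hleaf⟩
  have hbranch (y u : V) (hyu : (G.restrict A).Adj y u) :
      ∃ u', (G.restrict A).Adj y u' ∧ u' ≠ u := by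
    by_contra! h
    exact hleaf ⟨y, hyu.2.1, u, hyu, h⟩
  obtain ⟨x₀, v, p, hp, hnil⟩ := exists_isLongestPath hab
  cases p with
  | nil => exact absurd Walk.Nil.nil hnil
  | @cons _ x₁ _ h₀₁ q =>
  cases q with
  | nil =>
    -- a longest path of length one would make `x₀` a leaf
    obtain ⟨u, hu, hux₁⟩ := hbranch x₀ _ h₀₁
    have := hp.mem_support_of_adj hu
    simp only [Walk.support_cons, Walk.support_nil, List.mem_cons, List.not_mem_nil] at this
    rcases this with rfl | rfl | h
    · exact ((G.restrict A).loopless.irrefl _ hu).elim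
    · exact absurd rfl hux₁
    · exact h.elim
  | cons h₁₂ r =>
    exact ⟨x₀, h₀₁.2.1, hA.erase_of_isLongestPath hp,
      Or.inr ⟨x₁, h₀₁, hA.erase_erase_of_isLongestPath hbranch hp⟩⟩

end Removable

end SimpleGraph

namespace OddEdgeColoring

section EdgeSets

variable {V : Type*} [DecidableEq V]

def edgeDeg (S : Finset (Sym2 V)) (v : V) : ℕ := #{e ∈ S | v ∈ e}

def IsTJoin (J : Finset (Sym2 V)) (T : Finset V) : Prop :=
  ∀ v, Odd (edgeDeg J v) ↔ v ∈ T

variable {S S' : Finset (Sym2 V)} {v : V}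

@[simp] lemma edgeDeg_empty : edgeDeg (∅ : Finset (Sym2 V)) v = 0 := by simp [edgeDeg]

lemma edgeDeg_singleton (e : Sym2 V) : edgeDeg {e} v = if v ∈ e then 1 else 0 := by
  by_cases h : v ∈ e <;> simp [edgeDeg, filter_singleton, h]

lemma edgeDeg_mono (h : S ⊆ S') : edgeDeg S v ≤ edgeDeg S' v :=
  card_le_card (filter_subset_filter _ h)

lemma edgeDeg_union (h : Disjoint S S') : edgeDeg (S ∪ S') v = edgeDeg S v + edgeDeg S' v := by
  rw [edgeDeg, filter_union, card_union_of_disjoint (disjoint_filter_filter h)]; rfl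

lemma edgeDeg_sdiff (h : S' ⊆ S) : edgeDeg (S \ S') v = edgeDeg S v - edgeDeg S' v := by
  have hfilter : {e ∈ S \ S' | v ∈ e} = {e ∈ S | v ∈ e} \ {e ∈ S' | v ∈ e} := by
    ext; simp only [mem_filter, mem_sdiff]; tauto
  rw [edgeDeg, hfilter, card_sdiff_of_subset (filter_subset_filter _ h)]; rfl

lemma odd_edgeDeg_symmDiff :
    Odd (edgeDeg (S ∆ S') v) ↔ ¬(Odd (edgeDeg S v) ↔ Odd (edgeDeg S' v)) := by
  set X := {e ∈ S | v ∈ e}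
  set Y := {e ∈ S' | v ∈ e}
  have hfilter : {e ∈ S ∆ S' | v ∈ e} = X ∆ Y := by
    ext; simp only [X, Y, mem_filter, mem_symmDiff]; tauto
  have key : #(X ∆ Y) + 2 * #(X ∩ Y) = #X + #Y := by
    rw [Finset.symmDiff_def, card_union_of_disjoint disjoint_sdiff_sdiff]
    have := card_sdiff_add_card_inter X Y
    have := card_sdiff_add_card_inter Y X
    rw [inter_comm] at this
    omega
  rw [edgeDeg, hfilter]
  change Odd #(X ∆ Y) ↔ ¬(Odd #X ↔ Odd #Y)
  grind

lemma edgeDeg_toFinset_edges {G : SimpleGraph V} {x y : V} {p : G.Walk x y} (hp : p.IsTrail) :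
    edgeDeg p.edges.toFinset v = p.edges.countP (v ∈ ·) := by
  rw [edgeDeg, List.countP_eq_length_filter,
    ← List.toFinset_card_of_nodup (hp.edges_nodup.filter _), List.toFinset_filter]
  simp

lemma odd_edgeDeg_edges {G : SimpleGraph V} {x y : V} {p : G.Walk x y} (hp : p.IsTrail) :
    Odd (edgeDeg p.edges.toFinset v) ↔ x ≠ y ∧ (v = x ∨ v = y) := by
  rw [edgeDeg_toFinset_edges hp, ← Nat.not_even_iff_odd, hp.even_countP_edges_iff]
  tauto

variable {H : SimpleGraph V} {T : Finset V}

theorem exists_isTJoin (hT : Even #T) (hconn : ∀ x ∈ T, ∀ y ∈ T, H.Reachable x y) :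
    ∃ J : Finset (Sym2 V), ↑J ⊆ H.edgeSet ∧ IsTJoin J T := by
  induction hn : #T using Nat.strong_induction_on generalizing T with
  | _ n ih =>
  obtain rfl | ⟨x, hx⟩ := T.eq_empty_or_nonempty
  · exact ⟨∅, by simp, by simp [IsTJoin]⟩
  obtain ⟨y, hy, hyx⟩ : ∃ y ∈ T, y ≠ x := by
    refine exists_mem_ne ?_ x
    obtain ⟨k, hk⟩ := hT
    have := card_pos.2 ⟨x, hx⟩
    omega
  set T' := (T.erase x).erase y
  have hT' : #T' = n - 2 := by
    rw [card_erase_of_mem (mem_erase.2 ⟨hyx, hy⟩), card_erase_of_mem hx]; omega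
  have hT'T : T' ⊆ T := (erase_subset _ _).trans (erase_subset _ _)
  obtain ⟨J, hJH, hJ⟩ := ih (n - 2) (by subst hn; have := card_pos.2 ⟨x, hx⟩; omega)
    (by rw [hT']; subst hn; obtain ⟨k, hk⟩ := hT; exact ⟨k - 1, by omega⟩)
    (fun a ha b hb => hconn a (hT'T ha) b (hT'T hb)) hT'
  obtain ⟨p, hp⟩ := (hconn x hx y hy).exists_isPath
  refine ⟨J ∆ p.edges.toFinset, ?_, fun v => ?_⟩
  · refine (coe_subset.2 symmDiff_subset_union).trans ?_
    rw [coe_union]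
    exact Set.union_subset hJH fun e he => p.edges_subset_edgeSet (List.mem_toFinset.1 he)
  · rw [odd_edgeDeg_symmDiff, hJ, odd_edgeDeg_edges hp.isTrail]
    simp only [T', mem_erase]
    by_cases hvx : v = x <;> by_cases hvy : v = y <;> simp_all [eq_comm]

theorem exists_isAcyclic_isTJoin (hT : Even #T) (hconn : ∀ x ∈ T, ∀ y ∈ T, H.Reachable x y) :
    ∃ J : Finset (Sym2 V), ↑J ⊆ H.edgeSet ∧ IsTJoin J T ∧
      (fromEdgeSet (J : Set (Sym2 V))).IsAcyclic := by
  obtain ⟨J, ⟨hJH, hJ⟩, hmin⟩ := (measure fun J : Finset (Sym2 V) => #J).wf.has_min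
    {J : Finset (Sym2 V) | (J : Set (Sym2 V)) ⊆ H.edgeSet ∧ IsTJoin J T} (exists_isTJoin hT hconn)
  refine ⟨J, hJH, hJ, fun u c hc => ?_⟩
  -- deleting the edges of a cycle changes no degree parity
  set C := c.edges.toFinset
  have hCJ : C ⊆ J := fun e he => by
    have := c.edges_subset_edgeSet (List.mem_toFinset.1 he)
    rw [edgeSet_fromEdgeSet] at this
    exact this.1
  refine hmin (J \ C) ⟨(coe_subset.2 sdiff_subset).trans hJH, fun v => ?_⟩ ?_
  · have hC : ¬ Odd (edgeDeg C v) := by rw [odd_edgeDeg_edges hc.isTrail]; simp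
    rw [← hJ v, edgeDeg_sdiff hCJ, Nat.odd_sub (edgeDeg_mono hCJ), ← Nat.not_odd_iff_even]
    tauto
  · obtain ⟨e, he⟩ : C.Nonempty := by
      simpa [C, List.toFinset_nonempty_iff, ← Walk.edges_eq_nil] using hc.not_nil
    exact card_lt_card (sdiff_ssubset hCJ ⟨e, he⟩)

end EdgeSets


section Coloring

variable {V α : Type*} [DecidableEq V] [DecidableEq α]

def colorDeg (S : Finset (Sym2 V)) (f : Sym2 V → α) (v : V) (i : α) : ℕ :=
  edgeDeg {e ∈ S | f e = i} v

def OddOrZero (n : ℕ) : Prop := n = 0 ∨ Odd n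

def IsOddOn (S : Finset (Sym2 V)) (f : Sym2 V → α) : Prop :=
  ∀ v i, OddOrZero (colorDeg S f v i)

lemma oddOrZero_of_le_one {n : ℕ} (h : n ≤ 1) : OddOrZero n := by
  interval_cases n
  · exact Or.inl rfl
  · exact Or.inr odd_one

variable {S J : Finset (Sym2 V)} {f g : Sym2 V → α} {v : V} {i a b : α}

lemma edgeDeg_eq_card (h : ∀ e ∈ S, v ∈ e) : edgeDeg S v = #S := by
  rw [edgeDeg, filter_true_of_mem h]

lemma colorDeg_congr (h : ∀ e ∈ S, f e = g e) : colorDeg S f v i = colorDeg S g v i := by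
  rw [colorDeg, colorDeg, filter_congr fun e he => by rw [h e he]]

lemma colorDeg_le : colorDeg S f v i ≤ edgeDeg S v := edgeDeg_mono (filter_subset _ _)

lemma oddOrZero_colorDeg_of_edgeDeg_le_one (h : edgeDeg S v ≤ 1) : OddOrZero (colorDeg S f v i) :=
  oddOrZero_of_le_one (colorDeg_le.trans h)

lemma colorDeg_const (c : α) :
    colorDeg S (fun _ => c) v i = if c = i then edgeDeg S v else 0 := by
  split_ifs with h <;> simp [colorDeg, h]

lemma colorDeg_piecewise :
    colorDeg S (J.piecewise f g) v i = colorDeg (S ∩ J) f v i + colorDeg (S \ J) g v i := by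
  rw [colorDeg, colorDeg, colorDeg,
    ← edgeDeg_union (disjoint_filter_filter (disjoint_sdiff_inter S J).symm)]
  congr 1
  ext e
  by_cases he : e ∈ J <;> simp [he]

lemma colorDeg_add_colorDeg (hab : a ≠ b) (hg : ∀ e, g e = a ∨ g e = b) :
    colorDeg S g v a + colorDeg S g v b = edgeDeg S v := by
  rw [colorDeg, colorDeg,
    ← edgeDeg_union (disjoint_filter.2 fun e _ (ha : g e = a) hb => hab (ha ▸ hb))]
  congr 1
  ext e
  have := hg e
  simp only [mem_union, mem_filter]
  tauto

lemma colorDeg_eq_zero_of_forall_ne (hf : ∀ e, f e ≠ i) : colorDeg S f v i = 0 := by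
  simp [colorDeg, hf]

lemma colorDeg_eq_zero (hg : ∀ e, g e = a ∨ g e = b) (ha : i ≠ a) (hb : i ≠ b) :
    colorDeg S g v i = 0 := by
  have : {e ∈ S | g e = i} = ∅ := filter_eq_empty_iff.2 fun e _ he => by
    rcases hg e with h | h
    · exact ha (he ▸ h)
    · exact hb (he ▸ h)
  simp [colorDeg, this]

end Coloring


section Forest

variable {V α : Type*} [DecidableEq V] [DecidableEq α] {J : Finset (Sym2 V)}

lemma edgeDeg_eq_one_of_isLongestPath (hloop : ∀ e ∈ J, ¬ e.IsDiag)
    (hJ : (fromEdgeSet (J : Set (Sym2 V))).IsAcyclic)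
    {u v : V} {p : (fromEdgeSet (J : Set (Sym2 V))).Walk u v} (hp : p.IsLongestPath)
    (hnil : ¬ p.Nil) : edgeDeg J u = 1 := by
  rw [edgeDeg, card_eq_one]
  refine ⟨s(u, p.snd), eq_singleton_iff_unique_mem.2 ⟨?_, fun e he => ?_⟩⟩
  · exact mem_filter.2 ⟨(fromEdgeSet_adj _).1 (p.adj_snd hnil) |>.1, Sym2.mem_mk_left _ _⟩
  · obtain ⟨heJ, hue⟩ := mem_filter.1 he
    obtain ⟨y, rfl⟩ := Sym2.mem_iff_exists.1 hue
    have hadj : (fromEdgeSet (J : Set (Sym2 V))).Adj u y :=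
      (fromEdgeSet_adj _).2 ⟨heJ, fun h => hloop _ heJ (Sym2.mk_isDiag_iff.2 h)⟩
    rw [hJ.eq_snd_of_adj_start hp.1 hadj (hp.mem_support_of_adj hadj)]

lemma exists_leaf_star (hloop : ∀ e ∈ J, ¬ e.IsDiag)
    (hJ : (fromEdgeSet (J : Set (Sym2 V))).IsAcyclic) (hne : J.Nonempty) :
    ∃ x, ∃ K ⊆ J, K.Nonempty ∧ (∀ e ∈ K, x ∈ e ∧ ∀ u ∈ e, u ≠ x → edgeDeg J u = 1) ∧
      edgeDeg (J \ K) x ≤ 1 := by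
  have adj_of_mem {x y : V} (h : s(x, y) ∈ J) : (fromEdgeSet (J : Set (Sym2 V))).Adj x y :=
    (fromEdgeSet_adj _).2 ⟨h, fun hxy => hloop _ h (Sym2.mk_isDiag_iff.2 hxy)⟩
  obtain ⟨⟨a, b⟩, hab⟩ := hne
  have : Finite (fromEdgeSet (J : Set (Sym2 V))).edgeSet := by
    rw [edgeSet_fromEdgeSet]; exact J.finite_toSet.sdiff.to_subtype
  obtain ⟨x₀, v, p, hp, hnil⟩ := exists_isLongestPath (adj_of_mem hab)
  cases p with
  | nil => exact absurd Walk.Nil.nil hnil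
  | @cons _ x _ h q =>
  -- every neighbour of `x` other than the next vertex of the path starts a longest path
  obtain ⟨hq, hx₀⟩ := (Walk.cons_isPath_iff _ _).1 hp.1
  have hsnd : q.snd ∈ q.support := q.getVert_mem_support 1
  refine ⟨x, {e ∈ J | x ∈ e ∧ e ≠ s(x, q.snd)}, filter_subset _ _, ⟨s(x, x₀), ?_⟩,
    fun e he => ?_, ?_⟩
  · refine mem_filter.2 ⟨Sym2.eq_swap ▸ ((fromEdgeSet_adj _).1 h).1, Sym2.mem_mk_left _ _, ?_⟩
    intro hx
    exact hx₀ (Sym2.congr_right.1 hx ▸ hsnd)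
  · obtain ⟨heJ, hxe, hne⟩ := mem_filter.1 he
    obtain ⟨y, rfl⟩ := Sym2.mem_iff_exists.1 hxe
    refine ⟨hxe, fun u hu hux => ?_⟩
    obtain rfl : u = y := (Sym2.mem_iff.1 hu).resolve_left hux
    have hadj := adj_of_mem heJ
    have hyq : u ∉ q.support := fun hy => hne (by rw [hJ.eq_snd_of_adj_start hq hadj hy])
    refine edgeDeg_eq_one_of_isLongestPath hloop hJ (p := Walk.cons hadj.symm q)
      (hp.of_length_le (hq.cons hyq) (by simp)) Walk.not_nil_cons
  · refine (card_le_card fun e he => ?_).trans (card_singleton (s(x, q.snd))).le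
    simp only [mem_filter, mem_sdiff, not_and, not_not] at he
    exact mem_singleton.2 (he.1.2 he.1.1 he.2)

lemma exists_split_oddOrZero {p q k : ℕ} (hpq : p + q ≤ 1) (hk : 1 ≤ k) :
    ∃ m ≤ k, OddOrZero (p + m) ∧ OddOrZero (q + (k - m)) := by
  simp only [OddOrZero, Nat.odd_iff]
  obtain ⟨r, rfl | rfl⟩ := Nat.even_or_odd' k
  · by_cases hp : p = 1
    · exact ⟨2 * r, le_rfl, by omega⟩
    by_cases hq : q = 1
    · exact ⟨0, by omega, by omega⟩
    · exact ⟨1, by omega, by omega⟩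
  · by_cases hp : p = 1
    · exact ⟨0, by omega, by omega⟩
    · exact ⟨2 * r + 1, le_rfl, by omega⟩

lemma isOddOn_piecewise_of_leaf_star {x : V} {K K₁ : Finset (Sym2 V)} {g : Sym2 V → α}
    {a b : α} (hab : a ≠ b) (hKJ : K ⊆ J)
    (hK : ∀ e ∈ K, x ∈ e ∧ ∀ u ∈ e, u ≠ x → edgeDeg J u = 1) (hK₁K : K₁ ⊆ K)
    (hg : ∀ e, g e = a ∨ g e = b) (hodd : IsOddOn (J \ K) g)
    (ha : OddOrZero (colorDeg (J \ K) g x a + #K₁))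
    (hb : OddOrZero (colorDeg (J \ K) g x b + (#K - #K₁))) :
    IsOddOn J (K₁.piecewise (fun _ => a) (K.piecewise (fun _ => b) g)) := by
  intro v i
  have hsplit : colorDeg J (K₁.piecewise (fun _ => a) (K.piecewise (fun _ => b) g)) v i =
      (if a = i then edgeDeg K₁ v else 0) + (if b = i then edgeDeg (K \ K₁) v else 0) +
        colorDeg (J \ K) g v i := by
    have h₁ : (J \ K₁) ∩ K = K \ K₁ := by
      ext e; have := @hKJ e; simp only [mem_inter, mem_sdiff]; tauto
    have h₂ : (J \ K₁) \ K = J \ K := by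
      ext e; have := @hK₁K e; simp only [mem_sdiff]; tauto
    rw [colorDeg_piecewise, colorDeg_piecewise, colorDeg_const, colorDeg_const, h₁, h₂,
      inter_eq_right.2 (hK₁K.trans hKJ), add_assoc]
  by_cases hv : edgeDeg J v ≤ 1
  · exact oddOrZero_colorDeg_of_edgeDeg_le_one hv
  by_cases hvx : v = x
  · subst hvx
    have hK₁ : edgeDeg K₁ v = #K₁ := edgeDeg_eq_card fun e he => (hK e (hK₁K he)).1
    have hKK₁ : edgeDeg (K \ K₁) v = #K - #K₁ := by
      rw [edgeDeg_eq_card fun e he => (hK e (mem_sdiff.1 he).1).1, card_sdiff_of_subset hK₁K]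
    rw [hsplit, hK₁, hKK₁]
    by_cases hia : a = i
    · subst hia; simpa [hab.symm, add_comm] using ha
    by_cases hib : b = i
    · subst hib; simpa [hab, add_comm] using hb
    · simp [hia, hib, colorDeg_eq_zero hg (Ne.symm hia) (Ne.symm hib), OddOrZero]
  · have hK0 : edgeDeg K v = 0 := by
      refine card_eq_zero.2 (filter_eq_empty_iff.2 fun e he hve => hv ?_)
      exact ((hK e he).2 v hve hvx).le
    have h₁ : edgeDeg K₁ v = 0 := Nat.eq_zero_of_le_zero (hK0 ▸ edgeDeg_mono hK₁K)
    have h₂ : edgeDeg (K \ K₁) v = 0 := Nat.eq_zero_of_le_zero (hK0 ▸ edgeDeg_mono sdiff_subset)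
    simpa [hsplit, h₁, h₂] using hodd v i

theorem exists_isOddOn_of_isAcyclic (hloop : ∀ e ∈ J, ¬ e.IsDiag)
    (hJ : (fromEdgeSet (J : Set (Sym2 V))).IsAcyclic) {a b : α} (hab : a ≠ b) :
    ∃ g : Sym2 V → α, (∀ e, g e = a ∨ g e = b) ∧ IsOddOn J g := by
  induction hn : #J using Nat.strong_induction_on generalizing J with
  | _ n ih =>
  obtain rfl | hne := J.eq_empty_or_nonempty
  · exact ⟨fun _ => a, fun _ => Or.inl rfl, fun v i => by simp [colorDeg, OddOrZero]⟩
  -- colour the leaf star `K` at `x` last, splitting it so as to repair the parity at `x`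
  obtain ⟨x, K, hKJ, hKne, hK, hx⟩ := exists_leaf_star hloop hJ hne
  obtain ⟨g, hg, hodd⟩ := ih #(J \ K) (hn ▸ card_lt_card (sdiff_ssubset hKJ hKne))
    (fun e he => hloop e (mem_sdiff.1 he).1)
    (hJ.anti (fromEdgeSet_mono (coe_subset.2 sdiff_subset))) rfl
  obtain ⟨m, hmK, hma, hmb⟩ := exists_split_oddOrZero
    ((colorDeg_add_colorDeg hab hg).trans_le hx) (card_pos.2 hKne)
  obtain ⟨K₁, hK₁K, rfl⟩ := exists_subset_card_eq hmK
  refine ⟨K₁.piecewise (fun _ => a) (K.piecewise (fun _ => b) g), fun e => ?_,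
    isOddOn_piecewise_of_leaf_star hab hKJ hK hK₁K hg hodd hma hmb⟩
  by_cases h₁ : e ∈ K₁ <;> by_cases h : e ∈ K <;> simp [h₁, h, hg e]

end Forest

section ThreeColors

variable {V α : Type*} [DecidableEq V] [DecidableEq α] {E J : Finset (Sym2 V)} {T : Finset V}
  {g : Sym2 V → α} {v : V}

theorem isOddOn_piecewise_of_isTJoin (hJE : J ⊆ E) (hJ : IsTJoin J T)
    (hT : ∀ v, edgeDeg E v ≠ 0 → (v ∈ T ↔ Even (edgeDeg E v))) (hg : IsOddOn J g) {c : α}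
    (hgc : ∀ e, g e ≠ c) : IsOddOn E (J.piecewise g fun _ => c) := by
  intro v i
  rw [colorDeg_piecewise, inter_eq_right.2 hJE, colorDeg_const]
  split_ifs with hci
  · subst hci
    rw [colorDeg_eq_zero_of_forall_ne hgc, zero_add, edgeDeg_sdiff hJE]
    by_cases hE : edgeDeg E v = 0
    · exact Or.inl (by omega)
    refine Or.inr ((Nat.odd_sub (edgeDeg_mono hJE)).2 ?_)
    have h₁ := hJ v
    have h₂ := hT v hE
    rw [← Nat.not_even_iff_odd] at h₁ ⊢
    tauto
  · rw [add_zero]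
    exact hg v i

lemma colorDeg_eq_zero_or_of_oddOrZero {a b : α} (hab : a ≠ b) (hg : ∀ e, g e = a ∨ g e = b)
    (hodd : IsOddOn J g) (hv : OddOrZero (edgeDeg J v)) :
    colorDeg J g v a = 0 ∨ colorDeg J g v b = 0 := by
  have hsum := colorDeg_add_colorDeg (S := J) (v := v) hab hg
  rcases hodd v a with ha | ha
  · exact Or.inl ha
  rcases hodd v b with hb | hb
  · exact Or.inr hb
  simp only [OddOrZero, Nat.odd_iff] at ha hb hv
  omega

end ThreeColors

section EvenVerts

variable {V : Type*} [Fintype V] [DecidableEq V] {G : SimpleGraph V} [DecidableRel G.Adj]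
  {A B : Finset V} {v : V}

def evenVerts (G : SimpleGraph V) [DecidableRel G.Adj] (A : Finset V) : Finset V :=
  {v ∈ A | Even (edgeDeg (G.restrict A).edgeFinset v)}

lemma edgeDeg_edgeFinset (K : SimpleGraph V) [DecidableRel K.Adj] :
    edgeDeg K.edgeFinset v = K.degree v := by
  rw [← card_incidenceFinset_eq_degree, incidenceFinset_eq_filter]; rfl

lemma mem_of_edgeDeg_restrict_ne_zero (h : edgeDeg (G.restrict A).edgeFinset v ≠ 0) : v ∈ A := by
  obtain ⟨e, he⟩ := card_ne_zero.1 h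
  exact mem_of_mem_edgeSet_restrict (mem_edgeFinset.1 (mem_filter.1 he).1) (mem_filter.1 he).2

lemma even_card_evenVerts (hA : Even #A) : Even #(evenVerts G A) := by
  have hodd : {v ∈ A | ¬ Even (edgeDeg (G.restrict A).edgeFinset v)} =
      ({v | Odd ((G.restrict A).degree v)} : Finset V) := by
    ext v
    simp only [mem_filter, mem_univ, true_and, edgeDeg_edgeFinset, Nat.not_even_iff_odd]
    exact ⟨fun h => h.2, fun h => ⟨mem_of_edgeDeg_restrict_ne_zero
      (by rw [edgeDeg_edgeFinset]; exact h.pos.ne'), h⟩⟩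
  have := card_filter_add_card_filter_not (s := A)
    (p := fun v => Even (edgeDeg (G.restrict A).edgeFinset v))
  rw [hodd] at this
  have := (G.restrict A).even_card_odd_degree_vertices
  rw [evenVerts]
  grind

lemma edgeDeg_restrict_of_not_mem (h : v ∉ A) : edgeDeg (G.restrict A).edgeFinset v = 0 := by
  by_contra h'
  exact h (mem_of_edgeDeg_restrict_ne_zero h')

theorem exists_isOddOn_restrict (hBA : B ⊆ A) (hA : Even #A)
    (hconn : ∀ x ∈ evenVerts G A, ∀ y ∈ evenVerts G A, (G.restrict B).Reachable x y) :
    ∃ f : Sym2 V → Fin 4, (∀ e, f e ≠ 3) ∧ IsOddOn (G.restrict A).edgeFinset f ∧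
      ∀ v, v ∈ evenVerts G A ∨ v ∉ B →
        colorDeg (G.restrict A).edgeFinset f v 1 = 0 ∨
          colorDeg (G.restrict A).edgeFinset f v 2 = 0 := by
  obtain ⟨J, hJB, hJ, hJacyc⟩ := exists_isAcyclic_isTJoin (even_card_evenVerts hA) hconn
  have hJB' : J ⊆ (G.restrict B).edgeFinset := fun e he => mem_edgeFinset.2 (hJB he)
  have hJA : J ⊆ (G.restrict A).edgeFinset :=
    hJB'.trans (edgeFinset_mono (restrict_mono hBA))
  obtain ⟨g, hg12, hg⟩ := exists_isOddOn_of_isAcyclic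
    (fun e he => (G.restrict B).not_isDiag_of_mem_edgeSet (hJB he)) hJacyc
    (a := (1 : Fin 4)) (b := 2) (by decide)
  have hg0 : ∀ e, g e ≠ 0 := fun e => by rcases hg12 e with h | h <;> simp [h]
  refine ⟨J.piecewise g fun _ => 0, fun e => ?_, isOddOn_piecewise_of_isTJoin hJA hJ
    (fun v hv => by simp [evenVerts, mem_of_edgeDeg_restrict_ne_zero hv]) hg hg0, fun v hv => ?_⟩
  · by_cases he : e ∈ J
    · rcases hg12 e with h | h <;> simp [he, h]
    · simp [he]
  have hcolor : ∀ i ≠ 0,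
      colorDeg (G.restrict A).edgeFinset (J.piecewise g fun _ => 0) v i = colorDeg J g v i := by
    intro i hi
    rw [colorDeg_piecewise, inter_eq_right.2 hJA, colorDeg_const, if_neg (Ne.symm hi), add_zero]
  rw [hcolor 1 (by decide), hcolor 2 (by decide)]
  refine colorDeg_eq_zero_or_of_oddOrZero (by decide) hg12 hg ?_
  rcases hv with hv | hv
  · exact Or.inr ((hJ v).2 hv)
  · exact Or.inl (Nat.eq_zero_of_le_zero
      ((edgeDeg_mono hJB').trans (edgeDeg_restrict_of_not_mem hv).le))

end EvenVerts


section Star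

variable {V α : Type*} [Fintype V] [DecidableEq V] [DecidableEq α] {G : SimpleGraph V}
  [DecidableRel G.Adj] {A : Finset V} {z w v : V} {f : Sym2 V → α} {c : α}

lemma edgeFinset_restrict_sdiff_incidenceFinset :
    (G.restrict A).edgeFinset \ (G.restrict A).incidenceFinset z =
      (G.restrict (A.erase z)).edgeFinset := by
  ext ⟨x, y⟩
  simp only [mem_sdiff, mem_incidenceFinset, mk'_mem_incidenceSet_iff, mem_edgeFinset,
    mem_edgeSet, restrict_adj, mem_erase]
  grind

lemma colorDeg_piecewise_incidenceFinset (h : Sym2 V → α) (i : α) :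
    colorDeg (G.restrict A).edgeFinset (((G.restrict A).incidenceFinset z).piecewise h f) v i =
      colorDeg ((G.restrict A).incidenceFinset z) h v i +
        colorDeg (G.restrict (A.erase z)).edgeFinset f v i := by
  rw [colorDeg_piecewise, inter_eq_right.2 ((G.restrict A).incidenceFinset_subset z),
    edgeFinset_restrict_sdiff_incidenceFinset]

lemma edgeDeg_incidenceFinset_self (K : SimpleGraph V) [DecidableRel K.Adj] :
    edgeDeg (K.incidenceFinset z) z = edgeDeg K.edgeFinset z := by
  simp only [incidenceFinset_eq_filter, edgeDeg, filter_filter, and_self]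

lemma edgeDeg_incidenceFinset_le_one (K : SimpleGraph V) [DecidableRel K.Adj] (hvz : v ≠ z) :
    edgeDeg (K.incidenceFinset z) v ≤ 1 := by
  refine (card_le_card fun e he => ?_).trans (card_singleton s(z, v)).le
  obtain ⟨he, hve⟩ := mem_filter.1 he
  exact mem_singleton.2 <|
    (Sym2.mem_and_mem_iff (Ne.symm hvz)).1 ⟨((mem_incidenceFinset _ _ _).1 he).2, hve⟩

lemma colorDeg_restrict_erase_self {i : α} :
    colorDeg (G.restrict (A.erase z)).edgeFinset f z i = 0 :=
  Nat.eq_zero_of_le_zero (colorDeg_le.trans (edgeDeg_restrict_of_not_mem (notMem_erase z A)).le)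

theorem isOddOn_piecewise_of_odd (hodd : Odd (edgeDeg (G.restrict A).edgeFinset z))
    (hfc : ∀ e, f e ≠ c) (hf : IsOddOn (G.restrict (A.erase z)).edgeFinset f) :
    IsOddOn (G.restrict A).edgeFinset
      (((G.restrict A).incidenceFinset z).piecewise (fun _ => c) f) := by
  intro v i
  rw [colorDeg_piecewise_incidenceFinset, colorDeg_const]
  by_cases hvz : v = z
  · subst hvz
    rw [colorDeg_restrict_erase_self, add_zero, edgeDeg_incidenceFinset_self]
    split_ifs
    · exact Or.inr hodd
    · exact Or.inl rfl
  split_ifs with hc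
  · subst hc
    rw [colorDeg_eq_zero_of_forall_ne hfc, add_zero]
    exact oddOrZero_of_le_one (edgeDeg_incidenceFinset_le_one _ hvz)
  · simpa using hf v i

lemma odd_edgeDeg_incidenceFinset_sdiff_self (K : SimpleGraph V) [DecidableRel K.Adj]
    (hzw : K.Adj z w) (heven : Even (edgeDeg K.edgeFinset z)) :
    Odd (edgeDeg (K.incidenceFinset z \ {s(z, w)}) z) := by
  have hzwK : s(z, w) ∈ K.incidenceFinset z := by simpa using hzw
  have hpos := edgeDeg_mono (v := z) (singleton_subset_iff.2 (K.incidenceFinset_subset z hzwK))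
  rw [edgeDeg_sdiff (singleton_subset_iff.2 hzwK), edgeDeg_incidenceFinset_self]
  rw [edgeDeg_singleton, if_pos (Sym2.mem_mk_left _ _)] at hpos ⊢
  exact Nat.Even.sub_odd hpos heven odd_one

lemma edgeDeg_incidenceFinset_sdiff_right (K : SimpleGraph V) [DecidableRel K.Adj]
    (hzw : K.Adj z w) : edgeDeg (K.incidenceFinset z \ {s(z, w)}) w = 0 := by
  have hzwK : s(z, w) ∈ K.incidenceFinset z := by simpa using hzw
  have := edgeDeg_incidenceFinset_le_one K hzw.ne.symm
  rw [edgeDeg_sdiff (singleton_subset_iff.2 hzwK), edgeDeg_singleton,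
    if_pos (Sym2.mem_mk_right _ _)]
  omega

theorem isOddOn_piecewise_of_even (hzw : (G.restrict A).Adj z w)
    (heven : Even (edgeDeg (G.restrict A).edgeFinset z)) (hfc : ∀ e, f e ≠ c)
    (hf : IsOddOn (G.restrict (A.erase z)).edgeFinset f) {m : α} (hmc : m ≠ c)
    (hm : colorDeg (G.restrict (A.erase z)).edgeFinset f w m = 0) :
    IsOddOn (G.restrict A).edgeFinset (((G.restrict A).incidenceFinset z).piecewise
      (({s(z, w)} : Finset (Sym2 V)).piecewise (fun _ => m) fun _ => c) f) := by
  intro v i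
  rw [colorDeg_piecewise_incidenceFinset, colorDeg_piecewise, colorDeg_const, colorDeg_const,
    inter_eq_right.2 (singleton_subset_iff.2 (by simpa using hzw)), edgeDeg_singleton]
  by_cases hvz : v = z
  · subst hvz
    rw [colorDeg_restrict_erase_self, add_zero, if_pos (Sym2.mem_mk_left _ _)]
    split_ifs with hmi hci hci
    · exact absurd (hmi.trans hci.symm) hmc
    · exact Or.inr odd_one
    · exact Or.inr (by simpa using odd_edgeDeg_incidenceFinset_sdiff_self _ hzw heven)
    · exact Or.inl rfl
  by_cases hvw : v = w
  · subst hvw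
    rw [edgeDeg_incidenceFinset_sdiff_right _ hzw, if_pos (Sym2.mem_mk_right _ _)]
    split_ifs with hmi hci hci
    · exact absurd (hmi.trans hci.symm) hmc
    · subst hmi; simp [hm, OddOrZero]
    · subst hci; simp [colorDeg_eq_zero_of_forall_ne hfc, OddOrZero]
    · simpa using hf v i
  rw [if_neg (show v ∉ s(z, w) by simp [Sym2.mem_iff, hvz, hvw]), ite_self, zero_add]
  split_ifs with hci
  · subst hci
    rw [colorDeg_eq_zero_of_forall_ne hfc, add_zero]
    exact oddOrZero_of_le_one
      ((edgeDeg_mono sdiff_subset).trans (edgeDeg_incidenceFinset_le_one _ hvz))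
  · simpa using hf v i

end Star

section Connected

variable {V : Type*} [Fintype V] [DecidableEq V] {G : SimpleGraph V} [DecidableRel G.Adj]
  {A : Finset V}

lemma exists_isOddOn_three_of_connectedOn (hA : G.ConnectedOn A) (hA2 : Even #A) :
    ∃ f : Sym2 V → Fin 4, (∀ e, f e ≠ 3) ∧ IsOddOn (G.restrict A).edgeFinset f ∧
      ∀ v ∈ evenVerts G A, colorDeg (G.restrict A).edgeFinset f v 1 = 0 ∨
        colorDeg (G.restrict A).edgeFinset f v 2 = 0 := by
  obtain ⟨f, hf3, hf, hmiss⟩ := exists_isOddOn_restrict subset_rfl hA2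
    fun x hx y hy => hA x (mem_filter.1 hx).1 y (mem_filter.1 hy).1
  exact ⟨f, hf3, hf, fun v hv => hmiss v (Or.inl hv)⟩

lemma exists_isOddOn_three_of_connectedOn_erase (hA : G.ConnectedOn A) (hA2 : Even #A)
    {w : V} (hwA : w ∈ A) (hAw : G.ConnectedOn (A.erase w)) :
    ∃ f : Sym2 V → Fin 4, (∀ e, f e ≠ 3) ∧ IsOddOn (G.restrict A).edgeFinset f ∧
      (colorDeg (G.restrict A).edgeFinset f w 1 = 0 ∨
        colorDeg (G.restrict A).edgeFinset f w 2 = 0) := by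
  by_cases hw : Even (edgeDeg (G.restrict A).edgeFinset w)
  · obtain ⟨f, hf3, hf, hmiss⟩ := exists_isOddOn_three_of_connectedOn hA hA2
    exact ⟨f, hf3, hf, hmiss w (mem_filter.2 ⟨hwA, hw⟩)⟩
  -- `w ∉ evenVerts G A`, so the `T`-join can avoid `w`
  have hTw : evenVerts G A ⊆ A.erase w := fun x hx =>
    mem_erase.2 ⟨fun h => hw (h ▸ (mem_filter.1 hx).2), (mem_filter.1 hx).1⟩
  obtain ⟨f, hf3, hf, hmiss⟩ := exists_isOddOn_restrict (erase_subset _ _) hA2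
    fun x hx y hy => hAw x (hTw hx) y (hTw hy)
  exact ⟨f, hf3, hf, hmiss w (Or.inr (notMem_erase w _))⟩

theorem exists_isOddOn_of_connectedOn (hA : G.ConnectedOn A) :
    ∃ f : Sym2 V → Fin 4, IsOddOn (G.restrict A).edgeFinset f := by
  obtain hE | ⟨⟨a, b⟩, hab⟩ := (G.restrict A).edgeFinset.eq_empty_or_nonempty
  · exact ⟨fun _ => 0, by simp [hE, IsOddOn, colorDeg, OddOrZero]⟩
  obtain hA2 | hA2 := Nat.even_or_odd #A
  · obtain ⟨f, -, hf, -⟩ := exists_isOddOn_three_of_connectedOn hA hA2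
    exact ⟨f, hf⟩
  obtain ⟨z, hz, hAz, hz'⟩ := hA.exists_removable (mem_edgeFinset.1 hab)
  have hAz2 : Even #(A.erase z) := by
    rw [card_erase_of_mem hz]; exact Nat.Odd.sub_odd hA2 odd_one
  have of_odd (hodd : Odd (edgeDeg (G.restrict A).edgeFinset z)) :
      ∃ f : Sym2 V → Fin 4, IsOddOn (G.restrict A).edgeFinset f := by
    obtain ⟨f, hf3, hf, -⟩ := exists_isOddOn_three_of_connectedOn hAz hAz2
    exact ⟨_, isOddOn_piecewise_of_odd hodd hf3 hf⟩
  rcases hz' with hleaf | ⟨w, hzw, hAzw⟩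
  · refine of_odd ?_
    rw [edgeDeg_edgeFinset, degree_eq_one_iff_existsUnique_adj.2 hleaf]
    exact odd_one
  by_cases hzodd : Odd (edgeDeg (G.restrict A).edgeFinset z)
  · exact of_odd hzodd
  rw [Nat.not_odd_iff_even] at hzodd
  -- `s(z, w)` gets a colour missing at `w` in a colouring of the rest
  obtain ⟨f, hf3, hf, hm | hm⟩ := exists_isOddOn_three_of_connectedOn_erase hAz hAz2
    (mem_erase.2 ⟨hzw.ne.symm, hzw.2.2⟩) hAzw
  · exact ⟨_, isOddOn_piecewise_of_even hzw hzodd hf3 hf (by decide) hm⟩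
  · exact ⟨_, isOddOn_piecewise_of_even hzw hzodd hf3 hf (by decide) hm⟩

end Connected

section Components

variable {V : Type*} [Fintype V] [DecidableEq V] {G : SimpleGraph V} [DecidableRel G.Adj]

lemma connectedOn_supp_toFinset (c : G.ConnectedComponent) : G.ConnectedOn c.supp.toFinset := by
  intro x hx y hy
  simp only [Set.mem_toFinset, ConnectedComponent.mem_supp_iff] at hx hy
  obtain ⟨p⟩ := ConnectedComponent.exact (hx.trans hy.symm)
  refine reachable_restrict_of_support_subset le_rfl p fun w hw => ?_
  simp only [Set.mem_toFinset, ConnectedComponent.mem_supp_iff]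
  rw [← hx]
  exact ConnectedComponent.sound (p.takeUntil w hw).reachable.symm

lemma colorCount_eq_colorDeg {k : ℕ} (f : Sym2 V → Fin k) (v : V) (i : Fin k) :
    colorCount G f v i =
      colorDeg (G.restrict (G.connectedComponentMk v).supp.toFinset).edgeFinset f v i := by
  rw [colorCount, colorDeg, edgeDeg, filter_filter]
  congr 1
  ext e
  induction e with
  | h x y =>
  simp only [mem_filter, mem_incidenceFinset, mk'_mem_incidenceSet_iff, mem_edgeFinset,
    mem_edgeSet, restrict_adj, Set.mem_toFinset, ConnectedComponent.mem_supp_iff, Sym2.mem_iff]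
  have hcomp (h : G.Adj x y) : G.connectedComponentMk x = G.connectedComponentMk y :=
    ConnectedComponent.sound h.reachable
  constructor
  · rintro ⟨⟨h, rfl | rfl⟩, hf⟩
    · exact ⟨⟨h, rfl, (hcomp h).symm⟩, hf, Or.inl rfl⟩
    · exact ⟨⟨h, hcomp h, rfl⟩, hf, Or.inr rfl⟩
  · rintro ⟨⟨h, -⟩, hf, hv⟩
    exact ⟨⟨h, hv⟩, hf⟩

end Components

end OddEdgeColoring

theorem pyber_odd_four_edge_colorable (G : SimpleGraph V) [DecidableRel G.Adj] :
    ∃ f : Sym2 V → Fin 4, IsOddColoring G f := by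
  choose F hF using fun c : G.ConnectedComponent =>
    OddEdgeColoring.exists_isOddOn_of_connectedOn (OddEdgeColoring.connectedOn_supp_toFinset c)
  refine ⟨fun e => F (G.connectedComponentMk e.out.1) e, fun v i => ?_⟩
  rw [OddEdgeColoring.colorCount_eq_colorDeg,
    OddEdgeColoring.colorDeg_congr (g := F (G.connectedComponentMk v)) fun e he => ?_]
  · exact hF _ v i
  · have hmem := mem_of_mem_edgeSet_restrict (mem_edgeFinset.1 he) (Sym2.out_fst_mem e)
    rw [Set.mem_toFinset, ConnectedComponent.mem_supp_iff] at hmem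
    rw [hmem]
end

section
/- Let G be a connected subdivision of an odd graph, and let C be a cycle of G passing through a vertex of degree 2 in G. If C has even length or C passes through at least two vertices of degree 2 in G, then χ'_o(G) ≤ 3. -/
open SimpleGraph Finset

variable {V : Type*} [Fintype V] [DecidableEq V]

/-!
Let `D` be the set of vertices of degree 2 and `T` one of `D`, `D \ {v}` of even size. Among the
`T`-joins `J` of `G` with `v` covered, take one with fewest edges outside `C`. Odd vertices have
even `J`-degree and degree-2 vertices have `J`-degree 1 or 2. Minimality puts every even subgraph
`Z` of `J` inside `C` (otherwise `J ∆ Z`, or `J ∆ Z ∆ C` when `Z` passes through `v`, would be a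
better `T`-join), so a nonempty one is `C`. Hence every component of `J` has a vertex of odd
`J`-degree or is `C`, and `C` has an even number of vertices whenever `C ⊆ J` (a second degree-2
vertex on `C` would lie in `T`, yet have `J`-degree 2). Therefore some `A ⊆ J` has odd degree at
every vertex of positive even `J`-degree, and the colour classes `A`, `J \ A`, `E \ J` form an odd
3-edge-colouring.
-/

open scoped symmDiff

theorem Finset.card_symmDiff_add_two_mul_card_inter {α : Type*} [DecidableEq α]
    (s t : Finset α) : #(s ∆ t) + 2 * #(s ∩ t) = #s + #t := by
  rw [symmDiff_eq_sup_sdiff_inf, ← card_union_add_card_inter s t]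
  have := card_sdiff_add_card_inter (s ∪ t) (s ∩ t)
  rw [inter_eq_right.mpr inter_subset_union] at this
  change #((s ∪ t) \ (s ∩ t)) + 2 * #(s ∩ t) = _
  omega

theorem Finset.exists_even_card_between_erase {α : Type*} [DecidableEq α] {D : Finset α} {v : α}
    (hv : v ∈ D) : ∃ T ⊆ D, D.erase v ⊆ T ∧ Even #T := by
  by_cases hD : Even #D
  · exact ⟨D, subset_rfl, erase_subset _ _, hD⟩
  · refine ⟨D.erase v, erase_subset _ _, subset_rfl, ?_⟩
    have := card_pos.mpr ⟨v, hv⟩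
    rw [card_erase_of_mem hv, Nat.even_iff]
    rw [Nat.not_even_iff_odd, Nat.odd_iff] at hD
    omega

theorem Nat.zero_or_odd_of_le_of_le {a j d : ℕ} (haj : a ≤ j) (hjd : j ≤ d)
    (hd : Odd d ∨ d = 2) (hj : Odd d → Even j) (hj₂ : d = 2 → 0 < j)
    (ha : Even j → 0 < j → Odd a) :
    (a = 0 ∨ Odd a) ∧ (j - a = 0 ∨ Odd (j - a)) ∧ (d - j = 0 ∨ Odd (d - j)) := by
  simp only [Nat.odd_iff, Nat.even_iff] at *
  omega

section EdgeSets

omit [Fintype V]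

def edgeDeg (S : Finset (Sym2 V)) (u : V) : ℕ := #{e ∈ S | u ∈ e}

def IsEvenEdgeSet (Z : Finset (Sym2 V)) : Prop := ∀ u, Even (edgeDeg Z u)

def IsTJoin (T : Finset V) (J : Finset (Sym2 V)) : Prop := ∀ u, Odd (edgeDeg J u) ↔ u ∈ T

variable {A B S Z : Finset (Sym2 V)} {T : Finset V}

theorem edgeDeg_mono (h : A ⊆ B) (u : V) : edgeDeg A u ≤ edgeDeg B u :=
  card_le_card (filter_subset_filter _ h)

theorem edgeDeg_sdiff (h : A ⊆ B) (u : V) : edgeDeg (B \ A) u = edgeDeg B u - edgeDeg A u := by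
  rw [edgeDeg, edgeDeg, edgeDeg, ← card_sdiff_of_subset (filter_subset_filter _ h)]
  congr 1
  grind

theorem pos_edgeDeg_iff {u : V} : 0 < edgeDeg S u ↔ ∃ e ∈ S, u ∈ e := by
  simp [edgeDeg, card_pos, filter_nonempty_iff]

theorem edgeDeg_symmDiff_add_two_mul (A B : Finset (Sym2 V)) (u : V) :
    edgeDeg (A ∆ B) u + 2 * edgeDeg (A ∩ B) u = edgeDeg A u + edgeDeg B u := by
  have hfilter : {e ∈ A ∆ B | u ∈ e} = {e ∈ A | u ∈ e} ∆ {e ∈ B | u ∈ e} := by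
    ext
    simp only [mem_filter, mem_symmDiff]
    tauto
  rw [edgeDeg, edgeDeg, hfilter, edgeDeg, filter_inter_distrib]
  exact card_symmDiff_add_two_mul_card_inter _ _

theorem even_edgeDeg_symmDiff (A B : Finset (Sym2 V)) (u : V) :
    Even (edgeDeg (A ∆ B) u) ↔ (Even (edgeDeg A u) ↔ Even (edgeDeg B u)) := by
  rw [← Nat.even_add, ← edgeDeg_symmDiff_add_two_mul]
  simp [Nat.even_add]

theorem edgeDeg_symmDiff_of_edgeDeg_eq_zero {u : V} (h : edgeDeg B u = 0) :
    edgeDeg (A ∆ B) u = edgeDeg A u := by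
  have := edgeDeg_symmDiff_add_two_mul A B u
  have := edgeDeg_mono (inter_subset_right : A ∩ B ⊆ B) u
  omega

theorem edgeDeg_symmDiff_eq_zero {u : V} (h : {e ∈ A | u ∈ e} = {e ∈ B | u ∈ e}) :
    edgeDeg (A ∆ B) u = 0 := by
  have := edgeDeg_symmDiff_add_two_mul A B u
  have hAB : edgeDeg (A ∩ B) u = edgeDeg A u := by
    rw [edgeDeg, edgeDeg, filter_inter_distrib, h, inter_self]
  have hBA : edgeDeg B u = edgeDeg A u := by rw [edgeDeg, edgeDeg, h]
  omega

theorem IsEvenEdgeSet.symmDiff (hA : IsEvenEdgeSet A) (hB : IsEvenEdgeSet B) :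
    IsEvenEdgeSet (A ∆ B) := fun u => by
  simp [even_edgeDeg_symmDiff, hA u, hB u]

theorem IsTJoin.symmDiff {J : Finset (Sym2 V)} (hJ : IsTJoin T J) (hZ : IsEvenEdgeSet Z) :
    IsTJoin T (J ∆ Z) := fun u => by
  rw [← hJ u, ← Nat.not_even_iff_odd, ← Nat.not_even_iff_odd, even_edgeDeg_symmDiff]
  simp [hZ u]

theorem edgeDeg_toFinset {l : List (Sym2 V)} (hl : l.Nodup) (u : V) :
    edgeDeg l.toFinset u = l.countP (u ∈ ·) := by
  rw [edgeDeg, List.countP_eq_length_filter, ← List.toFinset_card_of_nodup (hl.filter _),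
    List.toFinset_filter]
  simp

theorem SimpleGraph.Walk.edges_toFinset_subset {K : Finset (Sym2 V)} {a b : V}
    (p : (fromEdgeSet (K : Set (Sym2 V))).Walk a b) : p.edges.toFinset ⊆ K := fun e he => by
  have := p.edges_subset_edgeSet (List.mem_toFinset.mp he)
  rw [edgeSet_fromEdgeSet] at this
  exact this.1

variable {H : SimpleGraph V}

theorem SimpleGraph.Walk.IsTrail.even_edgeDeg_iff {a b : V} {p : H.Walk a b} (hp : p.IsTrail)
    (x : V) : Even (edgeDeg p.edges.toFinset x) ↔ (a ≠ b → x ≠ a ∧ x ≠ b) := by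
  rw [edgeDeg_toFinset hp.edges_nodup]
  exact hp.even_countP_edges_iff x

theorem SimpleGraph.Walk.IsTrail.isEvenEdgeSet {a : V} {c : H.Walk a a} (hc : c.IsTrail) :
    IsEvenEdgeSet c.edges.toFinset := fun u =>
  (hc.even_edgeDeg_iff u).mpr (absurd rfl)

theorem SimpleGraph.Walk.IsPath.eq_empty_of_isEvenEdgeSet {a b : V} {p : H.Walk a b}
    (hp : p.IsPath) (hZp : Z ⊆ p.edges.toFinset) (hZ : IsEvenEdgeSet Z) : Z = ∅ := by
  induction p with
  | nil => simpa using hZp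
  | @cons a y b h q ih =>
    obtain ⟨hq, ha⟩ := (Walk.cons_isPath_iff h q).mp hp
    rw [edges_cons, List.toFinset_cons] at hZp
    have hfilter : {e ∈ Z | a ∈ e} ⊆ {s(a, y)} := by
      intro e he
      obtain ⟨heZ, hae⟩ := mem_filter.mp he
      rcases mem_insert.mp (hZp heZ) with rfl | heq
      · exact mem_singleton_self _
      · exact absurd (q.mem_support_iff_exists_mem_edges.mpr
          (.inr ⟨e, List.mem_toFinset.mp heq, hae⟩)) ha
    have hZa : edgeDeg Z a = 0 := by
      have : edgeDeg Z a ≤ 1 := (card_le_card hfilter).trans_eq (card_singleton _)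
      obtain ⟨k, hk⟩ := hZ a
      omega
    refine ih hq fun e he => (mem_insert.mp (hZp he)).resolve_left ?_
    rintro rfl
    exact (pos_edgeDeg_iff.mpr ⟨_, he, Sym2.mem_mk_left a y⟩).ne' hZa

theorem SimpleGraph.Walk.IsCycle.eq_empty_or_eq_of_isEvenEdgeSet {a : V} {c : H.Walk a a}
    (hc : c.IsCycle) (hZc : Z ⊆ c.edges.toFinset) (hZ : IsEvenEdgeSet Z) :
    Z = ∅ ∨ Z = c.edges.toFinset := by
  cases c with
  | nil => exact absurd rfl hc.ne_nil
  | @cons _ y _ h q =>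
    obtain ⟨hq, -⟩ := (cons_isCycle_iff q h).mp hc
    have avoiding :
        ∀ Y ⊆ (cons h q).edges.toFinset, IsEvenEdgeSet Y → s(a, y) ∉ Y → Y = ∅ :=
      fun Y hYc hY hfY => hq.eq_empty_of_isEvenEdgeSet (fun e he => by
        rcases List.mem_cons.mp (List.mem_toFinset.mp (hYc he)) with rfl | heq
        exacts [absurd he hfY, List.mem_toFinset.mpr heq]) hY
    by_cases hf : s(a, y) ∈ Z
    · right
      have hcompl := avoiding (Z ∆ (cons h q).edges.toFinset)
        (symmDiff_of_le hZc ▸ sdiff_subset) (hZ.symmDiff hc.isTrail.isEvenEdgeSet)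
        (by simp [mem_symmDiff, hf])
      exact symmDiff_eq_bot.mp hcompl
    · exact .inl (avoiding Z hZc hZ hf)

theorem SimpleGraph.Walk.IsCycle.pos_edgeDeg_iff {a : V} {c : H.Walk a a} (hc : c.IsCycle)
    {u : V} : 0 < edgeDeg c.edges.toFinset u ↔ u ∈ c.support := by
  rw [_root_.pos_edgeDeg_iff, mem_support_iff_exists_mem_edges_of_not_nil hc.not_nil]
  simp

theorem SimpleGraph.Walk.IsCycle.card_pos_edgeDeg [Fintype V] {a : V} {c : H.Walk a a}
    (hc : c.IsCycle) : #{u | 0 < edgeDeg c.edges.toFinset u} = c.length := by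
  have hsupp : ({u | 0 < edgeDeg c.edges.toFinset u} : Finset V) = c.support.toFinset := by
    ext
    simp [hc.pos_edgeDeg_iff]
  rw [hsupp, ← c.cons_tail_support, List.toFinset_cons,
    insert_eq_of_mem (List.mem_toFinset.mpr (end_mem_tail_support hc.not_nil)),
    List.toFinset_card_of_nodup hc.support_nodup, List.length_tail, length_support]
  simp

omit [DecidableEq V] in
theorem reachable_fromEdgeSet_of_mem {K : Set (Sym2 V)} {e : Sym2 V} (he : e ∈ K) {a b : V}
    (ha : a ∈ e) (hb : b ∈ e) : (fromEdgeSet K).Reachable a b := by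
  rcases eq_or_ne a b with rfl | hab
  · rfl
  · refine Adj.reachable ((fromEdgeSet_adj _).mpr ⟨?_, hab⟩)
    rwa [← (Sym2.mem_and_mem_iff hab).mp ⟨ha, hb⟩]

end EdgeSets

section Joins

variable (K : Finset (Sym2 V))

local notation "Reach" => SimpleGraph.Reachable (fromEdgeSet (K : Set (Sym2 V)))

def Joinable (S F : Finset V) : Prop :=
  ∀ u ∈ S, (∃ f ∈ F, Reach u f) ∨ Even #{w ∈ S | Reach u w}

def componentEdges (u : V) : Finset (Sym2 V) := {e ∈ K | ∀ w ∈ e, Reach u w}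

variable {K} {S F : Finset V}

theorem Joinable.exists_partner (hSF : Disjoint S F) (h : Joinable K S F) {s : V}
    (hs : s ∈ S) :
    ∃ t, t ≠ s ∧ (t ∈ S ∨ t ∈ F) ∧ Reach s t ∧ Joinable K ((S.erase s).erase t) F := by
  by_cases hpair : ∃ t ∈ S, t ≠ s ∧ Reach s t
  · obtain ⟨t, ht, hts, hst⟩ := hpair
    refine ⟨t, hts, .inl ht, hst, fun u hu => ?_⟩
    refine (h u (mem_of_mem_erase (mem_of_mem_erase hu))).imp_right fun heven => ?_
    rw [filter_erase, filter_erase]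
    by_cases hus : Reach u s
    · have hut := hus.trans hst
      have htwo : 1 < #{w ∈ S | Reach u w} :=
        one_lt_card.mpr ⟨s, by simp [hs, hus], t, by simp [ht, hut], hts.symm⟩
      rw [card_erase_of_mem (by simp [ht, hut, hts]), card_erase_of_mem (by simp [hs, hus])]
      rw [Nat.even_iff] at heven ⊢
      omega
    · have hut : ¬ Reach u t := fun hut => hus (hut.trans hst.symm)
      rwa [erase_eq_of_notMem fun hmem => hus (mem_filter.mp hmem).2,
        erase_eq_of_notMem fun hmem => hut (mem_filter.mp hmem).2]
  · push Not at hpair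
    have halone : {w ∈ S | Reach s w} = {s} := by
      ext w
      simp only [mem_filter, mem_singleton]
      exact ⟨fun ⟨hw, hsw⟩ => by_contra fun hne => hpair w hw hne hsw,
        by rintro rfl; exact ⟨hs, Reachable.refl _⟩⟩
    obtain ⟨f, hf, hsf⟩ := (h s hs).resolve_right (by simp [halone])
    have hfS : f ∉ S := disjoint_right.mp hSF hf
    refine ⟨f, fun hfs => hfS (hfs ▸ hs), .inr hf, hsf, fun u hu => ?_⟩
    rw [erase_eq_of_notMem fun h => hfS (mem_of_mem_erase h)] at hu ⊢
    obtain ⟨hus, huS⟩ := mem_erase.mp hu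
    refine (h u huS).imp_right fun heven => ?_
    rwa [filter_erase, erase_eq_of_notMem]
    simpa using fun _ hR => hpair u huS hus hR.symm

theorem Joinable.exists_subset_odd_iff (hSF : Disjoint S F) (h : Joinable K S F) :
    ∃ A ⊆ K, ∀ u ∉ F, Odd (edgeDeg A u) ↔ u ∈ S := by
  induction S using Finset.strongInduction with
  | H S ih =>
  rcases S.eq_empty_or_nonempty with rfl | ⟨s, hs⟩
  · exact ⟨∅, empty_subset _, fun u _ => by simp [edgeDeg]⟩
  obtain ⟨t, hts, ht, hst, h'⟩ := h.exists_partner hSF hs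
  have hsub : (S.erase s).erase t ⊆ S := (erase_subset _ _).trans (erase_subset _ _)
  obtain ⟨A, hAK, hA⟩ := ih _ ((erase_subset _ _).trans_ssubset (erase_ssubset hs))
    (hSF.mono_left hsub) h'
  obtain ⟨p, hp⟩ := hst.some.toPath
  refine ⟨A ∆ p.edges.toFinset,
    symmDiff_le_sup.trans (union_subset hAK p.edges_toFinset_subset), fun u huF => ?_⟩
  have hAu : Even (edgeDeg A u) ↔ u ∉ (S.erase s).erase t := by
    rw [← Nat.not_odd_iff_even, hA u huF]
  rw [← Nat.not_even_iff_odd, even_edgeDeg_symmDiff, hp.isTrail.even_edgeDeg_iff, hAu]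
  by_cases hus : u = s
  · subst hus
    simp [hs, hts.symm]
  by_cases hut : u = t
  · subst hut
    simp [ht.resolve_right huF, hts, Ne.symm hts]
  · simp [hus, hut]

theorem edgeDeg_componentEdges (u w : V) :
    edgeDeg (componentEdges K u) w = if Reach u w then edgeDeg K w else 0 := by
  rw [edgeDeg, componentEdges, filter_filter]
  split_ifs with huw
  · exact congrArg card (filter_congr fun e he => ⟨And.right, fun hwe =>
      ⟨fun z hz => huw.trans (reachable_fromEdgeSet_of_mem he hwe hz), hwe⟩⟩)
  · exact card_eq_zero.mpr (filter_eq_empty_iff.mpr fun e _ h => huw (h.1 w h.2))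

theorem exists_subset_odd_of_isEvenEdgeSet_eq {Z₀ : Finset (Sym2 V)}
    (hK : ∀ Z ⊆ K, Z.Nonempty → IsEvenEdgeSet Z → Z = Z₀)
    (hZ₀ : Z₀ ⊆ K → Even #{w | 0 < edgeDeg Z₀ w}) :
    ∃ A ⊆ K, ∀ u, Even (edgeDeg K u) → 0 < edgeDeg K u → Odd (edgeDeg A u) := by
  set S : Finset V := {u | Even (edgeDeg K u) ∧ 0 < edgeDeg K u}
  set F : Finset V := {u | Odd (edgeDeg K u)}
  have hSF : Disjoint S F :=
    disjoint_filter.mpr fun u _ h h' => Nat.not_even_iff_odd.mpr h' h.1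
  suffices Joinable K S F by
    obtain ⟨A, hAK, hA⟩ := this.exists_subset_odd_iff hSF
    exact ⟨A, hAK, fun u he hpos =>
      (hA u (by simpa [F, Nat.not_odd_iff_even] using he)).mpr (by simp [S, he, hpos])⟩
  intro u hu
  refine or_iff_not_imp_left.mpr fun hF => ?_
  push Not at hF
  have heven : ∀ w, Reach u w → Even (edgeDeg K w) :=
    fun w huw => Nat.not_odd_iff_even.mp fun ho => hF w (by simp [F, ho]) huw
  have hdeg := edgeDeg_componentEdges (K := K) u
  have hcomp : componentEdges K u = Z₀ := by
    refine hK _ (filter_subset _ _) ?_ fun w => ?_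
    · obtain ⟨e, he, hue⟩ := pos_edgeDeg_iff.mp (mem_filter.mp hu).2.2
      exact ⟨e, mem_filter.mpr ⟨he, fun z hz => reachable_fromEdgeSet_of_mem he hue hz⟩⟩
    · rw [hdeg]
      split_ifs with huw
      exacts [heven w huw, Even.zero]
  convert hZ₀ (hcomp ▸ filter_subset _ _) using 2
  ext w
  simp only [S, mem_filter, mem_univ, true_and, ← hcomp, hdeg]
  split_ifs with huw
  · simp [heven w huw, huw]
  · simp [huw]

end Joins

section Graph

variable (G : SimpleGraph V) [DecidableRel G.Adj]

theorem edgeDeg_edgeFinset (u : V) : edgeDeg G.edgeFinset u = G.degree u := by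
  rw [edgeDeg, ← incidenceFinset_eq_filter, card_incidenceFinset_eq_degree]

variable {G}

theorem edgeDeg_le_degree {S : Finset (Sym2 V)} (hS : S ⊆ G.edgeFinset) (u : V) :
    edgeDeg S u ≤ G.degree u :=
  (edgeDeg_mono hS u).trans_eq (edgeDeg_edgeFinset G u)

theorem filter_mem_eq_incidenceFinset {S : Finset (Sym2 V)} (hS : S ⊆ G.edgeFinset) {u : V}
    (h : edgeDeg S u = G.degree u) : {e ∈ S | u ∈ e} = G.incidenceFinset u := by
  rw [incidenceFinset_eq_filter]
  exact eq_of_subset_of_card_le (filter_subset_filter _ hS)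
    (by rw [← edgeDeg, ← edgeDeg, h, edgeDeg_edgeFinset])

theorem colorCount_eq_edgeDeg {k : ℕ} (f : Sym2 V → Fin k) (u : V) (i : Fin k) :
    colorCount G f u i = edgeDeg {e ∈ G.edgeFinset | f e = i} u := by
  rw [colorCount, incidenceFinset_eq_filter, edgeDeg, filter_filter, filter_filter]
  simp_rw [and_comm]

theorem oddChromIndex_le_three_of_subset (hsub : ∀ u, Odd (G.degree u) ∨ G.degree u = 2)
    {J A : Finset (Sym2 V)} (hJE : J ⊆ G.edgeFinset) (hAJ : A ⊆ J)
    (hJ : ∀ u, Odd (G.degree u) → Even (edgeDeg J u))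
    (hJ₂ : ∀ u, G.degree u = 2 → 0 < edgeDeg J u)
    (hA : ∀ u, Even (edgeDeg J u) → 0 < edgeDeg J u → Odd (edgeDeg A u)) :
    oddChromIndex G ≤ 3 := by
  let f : Sym2 V → Fin 3 := fun e => if e ∈ A then 0 else if e ∈ J then 1 else 2
  have hJE' : ∀ e ∈ J, e ∈ G.edgeSet := fun e he => mem_edgeFinset.mp (hJE he)
  have hclass : {e ∈ G.edgeFinset | f e = 0} = A ∧ {e ∈ G.edgeFinset | f e = 1} = J \ A ∧
      {e ∈ G.edgeFinset | f e = 2} = G.edgeFinset \ J := by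
    refine ⟨?_, ?_, ?_⟩ <;> ext e <;> by_cases heJ : e ∈ J <;> by_cases heA : e ∈ A
    all_goals first | exact absurd (hAJ heA) heJ | simp [f, heA, heJ, hJE']
  refine Nat.sInf_le ⟨f, fun u i => ?_⟩
  obtain ⟨h₀, h₁, h₂⟩ := Nat.zero_or_odd_of_le_of_le (edgeDeg_mono hAJ u)
    (edgeDeg_le_degree hJE u) (hsub u) (hJ u) (hJ₂ u) (hA u)
  rw [colorCount_eq_edgeDeg]
  fin_cases i
  · simpa [hclass.1] using h₀
  · simpa [hclass.2.1, edgeDeg_sdiff hAJ] using h₁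
  · simpa [hclass.2.2, edgeDeg_sdiff hJE, edgeDeg_edgeFinset] using h₂

theorem SimpleGraph.Walk.edges_toFinset_subset_edgeFinset {a b : V} (p : G.Walk a b) :
    p.edges.toFinset ⊆ G.edgeFinset := fun _ he =>
  mem_edgeFinset.mpr (p.edges_subset_edgeSet (List.mem_toFinset.mp he))

theorem SimpleGraph.Walk.IsCycle.edgeDeg_eq_two {a : V} {c : G.Walk a a} (hc : c.IsCycle)
    {u : V} (hu : u ∈ c.support) (hu₂ : G.degree u = 2) : edgeDeg c.edges.toFinset u = 2 := by
  have := hc.pos_edgeDeg_iff.mpr hu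
  have := edgeDeg_le_degree c.edges_toFinset_subset_edgeFinset u
  obtain ⟨k, hk⟩ := hc.isTrail.isEvenEdgeSet u
  omega

variable {T : Finset V} {Z₀ : Finset (Sym2 V)} {v : V}

theorem exists_isTJoin (hG : G.Connected) (hT : Even #T) :
    ∃ J ⊆ G.edgeFinset, IsTJoin T J := by
  have hreach (u w : V) : (fromEdgeSet (G.edgeFinset : Set (Sym2 V))).Reachable u w := by
    rw [coe_edgeFinset, fromEdgeSet_edgeSet]
    exact hG.preconnected u w
  have hjoin : Joinable G.edgeFinset T ∅ := fun u _ => .inr (by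
    rwa [filter_true_of_mem fun w _ => hreach u w])
  obtain ⟨J, hJE, hJ⟩ := hjoin.exists_subset_odd_iff (disjoint_empty_right T)
  exact ⟨J, hJE, fun u => hJ u (notMem_empty u)⟩

theorem exists_isTJoin_pos_edgeDeg (hG : G.Connected) (hT : Even #T)
    (hZ₀E : Z₀ ⊆ G.edgeFinset) (hZ₀ : IsEvenEdgeSet Z₀) (hZ₀v : 0 < edgeDeg Z₀ v) :
    ∃ J ⊆ G.edgeFinset, IsTJoin T J ∧ 0 < edgeDeg J v := by
  obtain ⟨J, hJE, hJ⟩ := exists_isTJoin hG hT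
  by_cases hJv : 0 < edgeDeg J v
  · exact ⟨J, hJE, hJ, hJv⟩
  · refine ⟨J ∆ Z₀, symmDiff_le_sup.trans (union_subset hJE hZ₀E), hJ.symmDiff hZ₀, ?_⟩
    rwa [symmDiff_comm, edgeDeg_symmDiff_of_edgeDeg_eq_zero (by omega)]

theorem exists_isEvenEdgeSet_edgeDeg_eq_zero {Z : Finset (Sym2 V)} (hZE : Z ⊆ G.edgeFinset)
    (hZ : IsEvenEdgeSet Z) (hZ₀E : Z₀ ⊆ G.edgeFinset) (hZ₀ : IsEvenEdgeSet Z₀)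
    (hv : G.degree v = 2) (hZ₀v : edgeDeg Z₀ v = 2) :
    ∃ Z' ⊆ G.edgeFinset, IsEvenEdgeSet Z' ∧ edgeDeg Z' v = 0 ∧ Z' \ Z₀ = Z \ Z₀ := by
  have hZv := edgeDeg_le_degree hZE v
  obtain ⟨k, hk⟩ := hZ v
  rcases (by omega : edgeDeg Z v = 0 ∨ edgeDeg Z v = 2) with hZv₀ | hZv₂
  · exact ⟨Z, hZE, hZ, hZv₀, rfl⟩
  · refine ⟨Z ∆ Z₀, symmDiff_le_sup.trans (union_subset hZE hZ₀E), hZ.symmDiff hZ₀,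
      edgeDeg_symmDiff_eq_zero ?_, symmDiff_sdiff_right _ _⟩
    rw [filter_mem_eq_incidenceFinset hZE (hZv₂.trans hv.symm),
      filter_mem_eq_incidenceFinset hZ₀E (hZ₀v.trans hv.symm)]

theorem exists_isTJoin_forall_isEvenEdgeSet_subset (hG : G.Connected) (hT : Even #T)
    (hZ₀E : Z₀ ⊆ G.edgeFinset) (hZ₀ : IsEvenEdgeSet Z₀) (hv : G.degree v = 2)
    (hZ₀v : edgeDeg Z₀ v = 2) :
    ∃ J ⊆ G.edgeFinset, IsTJoin T J ∧ 0 < edgeDeg J v ∧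
      ∀ Z ⊆ J, IsEvenEdgeSet Z → Z ⊆ Z₀ := by
  obtain ⟨J, ⟨hJE, hJ, hJv⟩, hmin⟩ := Set.exists_min_image
    {J | J ⊆ G.edgeFinset ∧ IsTJoin T J ∧ 0 < edgeDeg J v} (fun J => #(J \ Z₀))
    (Set.toFinite _) (exists_isTJoin_pos_edgeDeg hG hT hZ₀E hZ₀ (by omega))
  refine ⟨J, hJE, hJ, hJv, fun Z hZJ hZ => ?_⟩
  by_contra hZZ₀
  obtain ⟨Z', hZ'E, hZ', hZ'v, hZ'Z⟩ :=
    exists_isEvenEdgeSet_edgeDeg_eq_zero (hZJ.trans hJE) hZ hZ₀E hZ₀ hv hZ₀v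
  have hle := hmin (J ∆ Z') ⟨symmDiff_le_sup.trans (union_subset hJE hZ'E), hJ.symmDiff hZ',
    by rwa [edgeDeg_symmDiff_of_edgeDeg_eq_zero hZ'v]⟩
  have hsdiff : (J ∆ Z') \ Z₀ = (J \ Z₀) \ (Z \ Z₀) := by
    ext e
    have he := congrArg (e ∈ ·) hZ'Z
    have := @hZJ e
    simp only [mem_sdiff, eq_iff_iff] at he
    simp only [mem_sdiff, mem_symmDiff]
    tauto
  have hlt : #((J \ Z₀) \ (Z \ Z₀)) < #(J \ Z₀) :=
    card_lt_card (sdiff_ssubset (sdiff_subset_sdiff hZJ subset_rfl) (sdiff_nonempty.mpr hZZ₀))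
  simp only [hsdiff] at hle
  omega

end Graph

theorem cycle_through_two_vertex (G : SimpleGraph V) [DecidableRel G.Adj]
    (hG : G.Connected) (hsub : ∀ u : V, Odd (G.degree u) ∨ G.degree u = 2)
    (x : V) (C : G.Walk x x) (hC : C.IsCycle)
    (v : V) (hv : v ∈ C.support) (hdv : G.degree v = 2)
    (h : Even C.length ∨ ∃ w ∈ C.support, w ≠ v ∧ G.degree w = 2) :
    oddChromIndex G ≤ 3 := by
  have hCE := C.edges_toFinset_subset_edgeFinset
  obtain ⟨T, hTD, hDT, hT⟩ := exists_even_card_between_erase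
    (D := {u | G.degree u = 2}) (by simpa using hdv)
  obtain ⟨J, hJE, hJ, hJv, hJC⟩ := exists_isTJoin_forall_isEvenEdgeSet_subset hG hT hCE
    hC.isTrail.isEvenEdgeSet hdv (hC.edgeDeg_eq_two hv hdv)
  have hJT : ∀ u, G.degree u = 2 → u ≠ v → Odd (edgeDeg J u) := fun u hu huv =>
    (hJ u).mpr (hDT (by simp [hu, huv]))
  have hlen : C.edges.toFinset ⊆ J → Even #{w | 0 < edgeDeg C.edges.toFinset w} := by
    intro hCJ
    rcases h with heven | ⟨w, hw, hwv, hw₂⟩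
    · rwa [hC.card_pos_edgeDeg]
    · have := edgeDeg_mono hCJ w
      have := edgeDeg_le_degree hJE w
      have := hC.edgeDeg_eq_two hw hw₂
      obtain ⟨k, hk⟩ := hJT w hw₂ hwv
      omega
  obtain ⟨A, hAJ, hA⟩ := exists_subset_odd_of_isEvenEdgeSet_eq
    (fun Z hZJ hZne hZ => (hC.eq_empty_or_eq_of_isEvenEdgeSet (hJC Z hZJ hZ) hZ).resolve_left
      hZne.ne_empty) hlen
  refine oddChromIndex_le_three_of_subset hsub hJE hAJ (fun u hu => ?_) (fun u hu => ?_) hA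
  · refine Nat.not_odd_iff_even.mp fun hJu => ?_
    have hu₂ : G.degree u = 2 := by simpa using hTD ((hJ u).mp hJu)
    exact Nat.not_odd_iff_even.mpr (by rw [hu₂]; decide) hu
  · rcases eq_or_ne u v with rfl | huv
    exacts [hJv, (hJT u hu huv).pos]
end
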